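/- arXiv:1810.03340 — 9 statements merged into one kernel-verified Lean document; each statement's English description precedes it below -/
import Mathlib

section
/- Let (Ω, ℱ, P) be a probability space, let A : Ω → E be a Bochner-integrable random vector with values in a real or complex normed vector space E, and let E₁ ∈ ℱ be an event with P(E₁) > 0. Define the conditional expectation 𝔼[A | E₁] := 𝔼[A · 1_{E₁}] / P(E₁). Then ‖𝔼[A] − 𝔼[A | E₁]‖ ≤ (P(E₁ᶜ) · ‖𝔼[A]‖ + 𝔼[‖A‖ · 1_{E₁ᶜ}]) / P(E₁). -/
open MeasureTheory

/-- bias estimate from Lemma 12 of the paper.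
For a Bochner-integrable random vector `A` and an event `E₁` of positive probability, with the
conditional expectation `𝔼[A | E₁] = 𝔼[A · 1_{E₁}] / P(E₁)`, one has
`‖𝔼[A] − 𝔼[A | E₁]‖ ≤ (P(E₁ᶜ)‖𝔼[A]‖ + 𝔼[‖A‖ 1_{E₁ᶜ}]) / P(E₁)`. -/
theorem statement3 {Ω : Type*} [MeasurableSpace Ω] (P : Measure Ω) [IsProbabilityMeasure P]
    {E : Type*} [NormedAddCommGroup E] [NormedSpace ℝ E] [CompleteSpace E]
    (A : Ω → E) (hA : Integrable A P)
    (E₁ : Set Ω) (hE₁ : MeasurableSet E₁) (hpos : 0 < P E₁) :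
    ‖(∫ ω, A ω ∂P) - (P E₁).toReal⁻¹ • ∫ ω in E₁, A ω ∂P‖ ≤
      ((P E₁ᶜ).toReal * ‖∫ ω, A ω ∂P‖ + ∫ ω in E₁ᶜ, ‖A ω‖ ∂P) / (P E₁).toReal := by
  set μ := ∫ ω, A ω ∂P
  set p := (P E₁).toReal
  have hpne : P E₁ ≠ ⊤ := (measure_lt_top P E₁).ne
  have hp : 0 < p := ENNReal.toReal_pos hpos.ne' hpne
  have hsplit : (∫ ω in E₁, A ω ∂P) + (∫ ω in E₁ᶜ, A ω ∂P) = μ :=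
    integral_add_compl hE₁ hA
  have hpq : p + (P E₁ᶜ).toReal = 1 := by
    have := measure_add_measure_compl (μ := P) hE₁
    have h := congrArg ENNReal.toReal this
    rw [ENNReal.toReal_add hpne (measure_lt_top P E₁ᶜ).ne] at h
    simpa using h
  have key : μ - p⁻¹ • (∫ ω in E₁, A ω ∂P)
      = p⁻¹ • ((p - 1) • μ + (∫ ω in E₁ᶜ, A ω ∂P)) := by
    have hc : (∫ ω in E₁ᶜ, A ω ∂P) = μ - ∫ ω in E₁, A ω ∂P := by
      rw [← hsplit]; abel
    have hiv : p⁻¹ * (p - 1) = 1 - p⁻¹ := by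
      rw [mul_sub, inv_mul_cancel₀ hp.ne', mul_one]
    rw [hc, smul_add, smul_smul, hiv, smul_sub, sub_smul, one_smul]
    abel
  rw [key]
  have h1 : ‖(p - 1) • μ + (∫ ω in E₁ᶜ, A ω ∂P)‖
      ≤ (P E₁ᶜ).toReal * ‖μ‖ + ∫ ω in E₁ᶜ, ‖A ω‖ ∂P := by
    refine (norm_add_le _ _).trans (add_le_add ?_ ?_)
    · rw [norm_smul, Real.norm_eq_abs]
      have : |p - 1| = (P E₁ᶜ).toReal := by
        rw [abs_sub_comm, abs_of_nonneg (by linarith [hpq, ENNReal.toReal_nonneg (a := P E₁ᶜ)])]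
        linarith
      rw [this]
    · exact norm_integral_le_integral_norm _
  rw [norm_smul, Real.norm_eq_abs, abs_of_pos (inv_pos.mpr hp), div_eq_inv_mul]
  exact mul_le_mul_of_nonneg_left h1 (inv_pos.mpr hp).le
end

section
/- Let (Ω, ℱ, P) be a probability space, J a finite index set, and for each j ∈ J let L_j : Ω → [0,∞) be measurable and F_j : [0,∞) → [0,∞) be measurable with P(L_j > t) ≤ F_j(t) for all t ≥ 0. Fix thresholds L̄_j ≥ 0 and let E := {ω ∈ Ω : L_j(ω) ≤ L̄_j for all j ∈ J}. Then: (a) P(Eᶜ) ≤ Σ_{j∈J} F_j(L̄_j); and (b) for every i, j ∈ J, 𝔼[L_j² · 1_{L_i > L̄_i}] ≤ L̄_j² · F_i(L̄_i) + 2∫_{L̄_j}^∞ t F_j(t) dt. -/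
open MeasureTheory
open scoped ENNReal

/-- Inner integral computation. -/
lemma inner_calc (b c : ℝ) (hb : 0 ≤ b) (hc : 0 ≤ c) :
    ∫⁻ t in Set.Ioi b, Set.indicator (Set.Iio c) (fun t => ENNReal.ofReal (2 * t)) t
      = ENNReal.ofReal (c ^ 2 - b ^ 2) := by
  rw [lintegral_indicator measurableSet_Iio,
    Measure.restrict_restrict measurableSet_Iio, Set.Iio_inter_Ioi]
  rcases le_or_gt c b with h | h
  · rw [Set.Ioo_eq_empty (by exact fun hlt => absurd h (not_le.mpr hlt))]
    have : c ^ 2 - b ^ 2 ≤ 0 := by nlinarith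
    simp [ENNReal.ofReal_eq_zero.mpr this]
  · have hint : IntegrableOn (fun t : ℝ => 2 * t) (Set.Ioo b c) :=
      ((continuous_const.mul continuous_id).integrableOn_Icc).mono_set Set.Ioo_subset_Icc_self
    rw [← ofReal_integral_eq_lintegral_ofReal hint ?_]
    · congr 1
      rw [← integral_Ioc_eq_integral_Ioo, ← intervalIntegral.integral_of_le h.le]
      rw [intervalIntegral.integral_const_mul, integral_id]
      ring
    · filter_upwards [ae_restrict_mem measurableSet_Ioo] with t ht
      have : 0 < t := lt_of_le_of_lt hb ht.1
      positivity

lemma tail_bound {Ω : Type*} [MeasurableSpace Ω] (P : Measure Ω) [IsProbabilityMeasure P]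
    (L : Ω → ℝ) (hLmeas : Measurable L) (hLnn : ∀ ω, 0 ≤ L ω)
    (F : ℝ → ℝ) (hFmeas : Measurable F) (hFnn : ∀ t, 0 ≤ t → 0 ≤ F t)
    (hF : ∀ t : ℝ, 0 ≤ t → P {ω | t < L ω} ≤ ENNReal.ofReal (F t))
    (b : ℝ) (hb : 0 ≤ b) :
    (∫⁻ ω, ENNReal.ofReal (L ω ^ 2 - b ^ 2) ∂P) ≤
      2 * ∫⁻ t in Set.Ioi b, ENNReal.ofReal (t * F t) := by
  have key : (∫⁻ ω, ENNReal.ofReal (L ω ^ 2 - b ^ 2) ∂P)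
      = ∫⁻ t in Set.Ioi b, ENNReal.ofReal (2 * t) * P {ω | t < L ω} := by
    have hswap : ∫⁻ ω, (∫⁻ t in Set.Ioi b,
          Set.indicator (Set.Iio (L ω)) (fun t => ENNReal.ofReal (2 * t)) t) ∂P
        = ∫⁻ t in Set.Ioi b, ∫⁻ ω,
          Set.indicator (Set.Iio (L ω)) (fun t => ENNReal.ofReal (2 * t)) t ∂P := by
      apply lintegral_lintegral_swap
      apply Measurable.aemeasurable
      have : Function.uncurry (fun (ω : Ω) (t : ℝ) =>
          Set.indicator (Set.Iio (L ω)) (fun t => ENNReal.ofReal (2 * t)) t)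
          = fun p : Ω × ℝ => Set.indicator {p : Ω × ℝ | p.2 < L p.1}
              (fun p => ENNReal.ofReal (2 * p.2)) p := by
        ext p
        simp [Set.indicator, Function.uncurry, Set.mem_Iio]
      rw [this]
      exact Measurable.indicator
        ((ENNReal.measurable_ofReal.comp ((measurable_const.mul measurable_snd))))
        (measurableSet_lt measurable_snd (hLmeas.comp measurable_fst))
    calc (∫⁻ ω, ENNReal.ofReal (L ω ^ 2 - b ^ 2) ∂P)
        = ∫⁻ ω, (∫⁻ t in Set.Ioi b,
            Set.indicator (Set.Iio (L ω)) (fun t => ENNReal.ofReal (2 * t)) t) ∂P := by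
          refine lintegral_congr fun ω => ?_
          rw [inner_calc b (L ω) hb (hLnn ω)]
      _ = ∫⁻ t in Set.Ioi b, ∫⁻ ω,
            Set.indicator (Set.Iio (L ω)) (fun t => ENNReal.ofReal (2 * t)) t ∂P := hswap
      _ = ∫⁻ t in Set.Ioi b, ENNReal.ofReal (2 * t) * P {ω | t < L ω} := by
          refine lintegral_congr fun t => ?_
          have : (fun ω => Set.indicator (Set.Iio (L ω)) (fun t => ENNReal.ofReal (2 * t)) t)
              = Set.indicator {ω | t < L ω} (fun _ => ENNReal.ofReal (2 * t)) := by
            ext ω; simp [Set.indicator, Set.mem_Iio]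
          rw [this, lintegral_indicator (measurableSet_lt measurable_const hLmeas),
            setLIntegral_const]
  rw [key, ← lintegral_const_mul' _ _ (by norm_num : (2 : ℝ≥0∞) ≠ ⊤)]
  refine setLIntegral_mono (by fun_prop) fun t ht => ?_
  have ht' : 0 ≤ t := le_trans hb (le_of_lt ht)
  calc ENNReal.ofReal (2 * t) * P {ω | t < L ω}
      ≤ ENNReal.ofReal (2 * t) * ENNReal.ofReal (F t) :=
        mul_le_mul_right (hF t ht') _
    _ = 2 * ENNReal.ofReal (t * F t) := by
        rw [← ENNReal.ofReal_mul (by positivity), mul_assoc,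
          ENNReal.ofReal_mul (by norm_num), ENNReal.ofReal_ofNat]

/-- Lemma 6 of the paper.
If `P(L_j > t) ≤ F_j(t)` for all `t ≥ 0`, and `E = {ω | ∀ j, L_j ω ≤ L̄_j}`, then
(a) `P(Eᶜ) ≤ ∑_j F_j(L̄_j)`, and
(b) `𝔼[L_j² 1_{L_i > L̄_i}] ≤ L̄_j² F_i(L̄_i) + 2 ∫_{L̄_j}^∞ t F_j(t) dt` for all `i, j`
(stated with Lebesgue integrals so that the inequality also holds when the right-hand side
is infinite). -/
theorem statement4 {Ω : Type*} [MeasurableSpace Ω] (P : Measure Ω) [IsProbabilityMeasure P]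
    {J : Type*} [Fintype J]
    (L : J → Ω → ℝ) (hLmeas : ∀ j, Measurable (L j)) (hLnn : ∀ j ω, 0 ≤ L j ω)
    (F : J → ℝ → ℝ) (hFmeas : ∀ j, Measurable (F j)) (hFnn : ∀ j t, 0 ≤ t → 0 ≤ F j t)
    (hF : ∀ j, ∀ t : ℝ, 0 ≤ t → P {ω | t < L j ω} ≤ ENNReal.ofReal (F j t))
    (Lb : J → ℝ) (hLb : ∀ j, 0 ≤ Lb j) :
    P ({ω | ∀ j, L j ω ≤ Lb j}ᶜ) ≤ ∑ j, ENNReal.ofReal (F j (Lb j)) ∧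
    ∀ i j : J,
      (∫⁻ ω in {ω | Lb i < L i ω}, ENNReal.ofReal (L j ω ^ 2) ∂P) ≤
        ENNReal.ofReal (Lb j ^ 2 * F i (Lb i)) +
          2 * ∫⁻ t in Set.Ioi (Lb j), ENNReal.ofReal (t * F j t) := by
  constructor
  · have hset : ({ω | ∀ j, L j ω ≤ Lb j}ᶜ : Set Ω) = ⋃ j, {ω | Lb j < L j ω} := by
      ext ω; simp [not_forall, not_le]
    rw [hset]
    exact le_trans (measure_iUnion_fintype_le P _)
      (Finset.sum_le_sum fun j _ => hF j (Lb j) (hLb j))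
  · intro i j
    have hAi : MeasurableSet {ω | Lb i < L i ω} := measurableSet_lt measurable_const (hLmeas i)
    calc (∫⁻ ω in {ω | Lb i < L i ω}, ENNReal.ofReal (L j ω ^ 2) ∂P)
        ≤ ∫⁻ ω in {ω | Lb i < L i ω},
            (ENNReal.ofReal (Lb j ^ 2) + ENNReal.ofReal (L j ω ^ 2 - Lb j ^ 2)) ∂P := by
          refine setLIntegral_mono (by fun_prop) fun ω _ => ?_
          rcases le_total (L j ω ^ 2) (Lb j ^ 2) with h | h
          · exact le_trans (ENNReal.ofReal_le_ofReal h) le_self_add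
          · rw [← ENNReal.ofReal_add (by positivity) (by linarith)]
            exact ENNReal.ofReal_le_ofReal (by linarith)
      _ ≤ ENNReal.ofReal (Lb j ^ 2 * F i (Lb i)) +
            2 * ∫⁻ t in Set.Ioi (Lb j), ENNReal.ofReal (t * F j t) := by
          rw [lintegral_add_left measurable_const, setLIntegral_const]
          gcongr
          · calc ENNReal.ofReal (Lb j ^ 2) * P {ω | Lb i < L i ω}
                ≤ ENNReal.ofReal (Lb j ^ 2) * ENNReal.ofReal (F i (Lb i)) :=
                  mul_le_mul_right (hF i (Lb i) (hLb i)) _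
              _ = ENNReal.ofReal (Lb j ^ 2 * F i (Lb i)) :=
                  (ENNReal.ofReal_mul (by positivity)).symm
          · exact le_trans (setLIntegral_le_lintegral _ _)
              (tail_bound P (L j) (hLmeas j) (hLnn j) (F j) (hFmeas j) (hFnn j) (hF j)
                (Lb j) (hLb j))
end

section
/- Let f ≥ 2 be an even integer and N := f/2 + 1. Define κ : ℝ → ℝ by κ(t) = (sin(Nπt)/(N·sin(πt)))⁴ for t ∉ ℤ and κ(t) = 1 for t ∈ ℤ (so κ = |N^{-1} Σ_{k=0}^{N−1} e^{2πikt}|⁴ is a trigonometric polynomial, in particular smooth). Then the second derivative of κ at 0 equals κ''(0) = −π² f (f+4)/3. -/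
/-!
Write `f = 2m` and `N = m + 1`. The symmetric Dirichlet sum
`D_N(x) = ∑_{k<N} cos((2k + 1 - N) x)` satisfies `sin x · D_N(x) = sin(N x)` by telescoping, and
`|D_N(nπ)| = N` at the integers, so `κ(t) = D_N(πt)⁴ / N⁴` everywhere. Since `D_N(0) = N` and
`D_N'(0) = 0`, only the term `4 D_N(0)³ D_N''(0)` survives in `(D_N⁴)''(0)`, and
`D_N''(0) = -∑_{k<N} (2k + 1 - N)² = -N(N² - 1)/3`. Hence
`κ''(0) = -4π²(N² - 1)/3 = -π² f (f + 4)/3`.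
-/

open Classical

/-- The univariate Fejér-type kernel `κ(t) = (sin(Nπt)/(N sin(πt)))⁴` with `N = f/2 + 1`,
extended by `1` at the integers (where the formula degenerates); `κ` agrees with the smooth
trigonometric polynomial `|N⁻¹ ∑_{k<N} e^{2πikt}|⁴`. -/
noncomputable def fejerKappa (f : ℕ) : ℝ → ℝ := fun t =>
  if ∃ n : ℤ, t = (n : ℝ) then 1
  else (Real.sin (((f : ℝ) / 2 + 1) * Real.pi * t) /
      (((f : ℝ) / 2 + 1) * Real.sin (Real.pi * t))) ^ 4

open Real Finset

section SecondDerivative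

variable {𝕜 : Type*} [NontriviallyNormedField 𝕜]

theorem deriv_deriv_comp_mul_left (c : 𝕜) (F : 𝕜 → 𝕜) (x : 𝕜) :
    deriv (deriv fun y => F (c * y)) x = c ^ 2 * deriv (deriv F) (c * x) := by
  have hfirst : deriv (fun y => F (c * y)) = fun y => c * deriv F (c * y) :=
    funext fun y => deriv_comp_mul_left c F y
  rw [hfirst, deriv_const_mul_field, deriv_comp_mul_left, smul_eq_mul]
  ring

theorem deriv_deriv_fun_pow {g g' : 𝕜 → 𝕜} {g'' x : 𝕜} (n : ℕ)
    (hg : ∀ y, HasDerivAt g (g' y) y) (hg' : HasDerivAt g' g'' x) :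
    deriv (deriv fun y => g y ^ n) x
      = n * ((n - 1 : ℕ) * g x ^ (n - 2) * g' x ^ 2 + g x ^ (n - 1) * g'') := by
  have hfirst : deriv (fun y => g y ^ n) = fun y => n * g y ^ (n - 1) * g' y :=
    funext fun y => ((hg y).fun_pow n).deriv
  rw [hfirst, ((((hg x).fun_pow (n - 1)).const_mul (n : 𝕜)).fun_mul hg').deriv, Nat.sub_sub]
  ring

end SecondDerivative

theorem hasDerivAt_sum_cos_mul {ι : Type*} (s : Finset ι) (a : ι → ℝ) (x : ℝ) :
    HasDerivAt (fun x => ∑ i ∈ s, cos (a i * x)) (-∑ i ∈ s, a i * sin (a i * x)) x := by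
  rw [← sum_neg_distrib]
  refine HasDerivAt.fun_sum fun i _ => ?_
  simpa [mul_comm] using ((hasDerivAt_id' x).const_mul (a i)).cos

theorem hasDerivAt_sum_mul_sin_mul {ι : Type*} (s : Finset ι) (a : ι → ℝ) (x : ℝ) :
    HasDerivAt (fun x => ∑ i ∈ s, a i * sin (a i * x)) (∑ i ∈ s, a i ^ 2 * cos (a i * x)) x := by
  refine HasDerivAt.fun_sum fun i _ => ?_
  exact ((((hasDerivAt_id' x).const_mul (a i)).sin).const_mul (a i)).congr_deriv (by ring)

theorem sum_range_two_mul_add_sq (N : ℕ) (a : ℝ) :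
    ∑ k ∈ range N, (2 * (k : ℝ) + a) ^ 2
      = N * a ^ 2 + 2 * a * N * (N - 1) + 2 * N * (N - 1) * (2 * N - 1) / 3 := by
  induction N with
  | zero => simp
  | succ N ih => rw [sum_range_succ, ih]; push_cast; ring

noncomputable def dirichletCos (N : ℕ) (x : ℝ) : ℝ :=
  ∑ k ∈ range N, cos ((2 * k + 1 - N) * x)

theorem sin_mul_dirichletCos (N : ℕ) (x : ℝ) : sin x * dirichletCos N x = sin (N * x) := by
  have hstep : ∀ k ∈ range N, sin ((2 * ((k + 1 : ℕ) : ℝ) - N) * x) - sin ((2 * (k : ℝ) - N) * x)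
      = 2 * (sin x * cos ((2 * k + 1 - N) * x)) := by
    intro k _
    rw [sin_sub_sin]
    push_cast
    rw [mul_assoc]
    congr 3 <;> ring
  have htel := sum_range_sub (fun k : ℕ => sin ((2 * (k : ℝ) - N) * x)) N
  rw [sum_congr rfl hstep, ← mul_sum, ← mul_sum] at htel
  simp only [Nat.cast_zero, mul_zero, zero_sub, neg_mul, sin_neg, sub_neg_eq_add] at htel
  rw [dirichletCos, show (2 * (N : ℝ) - N) * x = N * x by ring] at *
  linarith

theorem dirichletCos_int_mul_pi_sq (N : ℕ) (n : ℤ) : dirichletCos N (n * π) ^ 2 = (N : ℝ) ^ 2 := by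
  have hterm : ∀ k ∈ range N, cos ((2 * k + 1 - N) * (n * π)) = cos ((N - 1) * (n * π)) := by
    intro k _
    -- each frequency differs from `1 - N` by the even integer `2k`
    rw [show (2 * k + 1 - N) * (n * π) = -((N - 1) * (n * π)) + (k * n : ℤ) * (2 * π) by
      push_cast; ring, cos_add_int_mul_two_pi, cos_neg]
  have hsin : sin ((N - 1) * (n * π)) = 0 := by
    simpa [mul_assoc] using sin_int_mul_pi (((N : ℤ) - 1) * n)
  rw [dirichletCos, sum_congr rfl hterm, sum_const, card_range, nsmul_eq_mul, mul_pow,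
    cos_sq', hsin]
  ring

theorem fejerKappa_add_self (m : ℕ) :
    fejerKappa (m + m) = fun t => dirichletCos (m + 1) (π * t) ^ 4 / ((m + 1 : ℕ) : ℝ) ^ 4 := by
  have hN : ((m + m : ℕ) : ℝ) / 2 + 1 = ((m + 1 : ℕ) : ℝ) := by push_cast; ring
  funext t
  rw [fejerKappa, hN]
  split_ifs with ht
  · obtain ⟨n, rfl⟩ := ht
    rw [mul_comm, show ∀ y : ℝ, y ^ 4 = (y ^ 2) ^ 2 by intro y; ring, dirichletCos_int_mul_pi_sq,
      ← pow_mul, div_self (by positivity)]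
  · have hsin : sin (π * t) ≠ 0 := by
      rw [Ne, sin_eq_zero_iff]
      rintro ⟨n, hn⟩
      exact ht ⟨n, by nlinarith [pi_pos]⟩
    rw [mul_assoc, ← sin_mul_dirichletCos]
    field_simp

theorem statement7_general (f : ℕ) (hfeven : Even f) :
    deriv (deriv (fejerKappa f)) 0 = -(Real.pi ^ 2 * f * (f + 4) / 3) := by
  obtain ⟨m, rfl⟩ := hfeven
  set N := m + 1 with hN
  set a : ℕ → ℝ := fun k => 2 * k + 1 - N
  have hD : ∀ x, HasDerivAt (dirichletCos N) (-∑ k ∈ range N, a k * sin (a k * x)) x :=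
    hasDerivAt_sum_cos_mul (range N) a
  have hD' : HasDerivAt (fun x => -∑ k ∈ range N, a k * sin (a k * x))
      (-∑ k ∈ range N, a k ^ 2 * cos (a k * 0)) 0 :=
    (hasDerivAt_sum_mul_sin_mul (range N) a 0).neg
  have hsq : ∑ k ∈ range N, a k ^ 2 = N * ((N : ℝ) ^ 2 - 1) / 3 := by
    simp only [a, add_sub_assoc, sum_range_two_mul_add_sq]
    ring
  have hD0 : dirichletCos N 0 = N := by simp [dirichletCos]
  rw [fejerKappa_add_self, ← hN, funext fun t => div_eq_inv_mul (dirichletCos N (π * t) ^ 4) _,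
    deriv_const_mul_field', deriv_const_mul_field,
    deriv_deriv_comp_mul_left π (fun x => dirichletCos N x ^ 4), mul_zero,
    deriv_deriv_fun_pow 4 hD hD']
  simp only [mul_zero, cos_zero, mul_one, sin_zero, sum_const_zero, neg_zero, hD0, hsq]
  push_cast [hN]
  field_simp
  ring

/-- the second derivative of the Fejér-type kernel at `0` is
`κ''(0) = −π² f (f+4)/3`. -/
theorem statement7 (f : ℕ) (hfeven : Even f) (hf2 : 2 ≤ f) :
    deriv (deriv (fejerKappa f)) 0 = -(Real.pi ^ 2 * f * (f + 4) / 3) :=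
  statement7_general f hfeven
end

section
/- Let f ≥ 128 be an even integer, N := f/2 + 1, κ(t) := (sin(Nπt)/(N·sin(πt)))⁴ for t ∉ ℤ and κ(t) := 1 for t ∈ ℤ, C_f := π²f(f+4)/3, and for t ∈ ℝ^d let K(t) := Π_{i=1}^d κ(t_i). Then: (a) for every t ∈ ℝ^d with ‖t‖₂ ≤ 1/(8√C_f), one has K(t) ≤ 1 − (C_f/4)‖t‖₂² + 16 C_f² ‖t‖₂⁴; and (b) for every c with 0 < c ≤ 1/(8√(2C_f)) and every t ∈ [−1/2, 1/2]^d with ‖t‖₂ ≥ c, one has |K(t)| ≤ 1 − (C_f/8) c². -/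
open Classical

/-- The constant `C_f = −κ''(0) = π² f (f+4)/3`. -/
noncomputable def fejerC (f : ℕ) : ℝ := Real.pi ^ 2 * f * (f + 4) / 3

/-!
Write `N = f/2 + 1`. For even `f`, `κ(u) = (D_N(πu)/N)⁴` with
`D_N(θ) = ∑_{k<N} cos((2k+1-N)θ) = sin(Nθ)/sin θ`. The phases satisfy
`∑ ((2k+1-N)θ)² = θ² N(N²-1)/3`, which at `θ = πu` is `(3/4) N C_f u²`; so termwise quadratic
bounds on `cos` give `κ(u) ≤ 1 - C_f u²/3` when `C_f u² ≤ 1/64`, and `κ(u) ≤ 1 - 1/512` for the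
remaining `|u| ≤ 1/2`. Part (a) then follows from `∏ (1 - aᵢ) ≤ 1 - ∑ aᵢ + (∑ aᵢ)²/2`. For part (b)
cap the defects at `aᵢ = min (C_f tᵢ²/3) (1/512)` and use `∏ (1 - aᵢ) ≤ 1 - min (∑ aᵢ) 1 / 2`.
-/

open Real Finset

noncomputable def dirichletSum (N : ℕ) (θ : ℝ) : ℝ :=
  ∑ k ∈ range N, cos ((2 * k + 1 - N) * θ)

theorem dirichletSum_mul_sin (N : ℕ) (θ : ℝ) : dirichletSum N θ * sin θ = sin (N * θ) := by
  have telescope : ∀ k : ℕ, cos ((2 * k + 1 - N) * θ) * sin θ =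
      (sin ((2 * (k + 1 : ℕ) - N) * θ) - sin ((2 * k - N) * θ)) / 2 := by
    intro k
    push_cast
    rw [show (2 * ((k : ℝ) + 1) - N) * θ = (2 * k + 1 - N) * θ + θ by ring,
      show (2 * (k : ℝ) - N) * θ = (2 * k + 1 - N) * θ - θ by ring, sin_add, sin_sub]
    ring
  rw [dirichletSum, sum_mul, sum_congr rfl fun k _ => telescope k, ← sum_div,
    sum_range_sub (fun k : ℕ => sin ((2 * k - N) * θ))]
  push_cast
  rw [show (2 * (N : ℝ) - N) * θ = N * θ by ring, show (2 * (0 : ℝ) - N) * θ = -(N * θ) by ring,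
    sin_neg]
  ring

theorem sum_range_sq_two_mul_add (n : ℕ) (a : ℝ) :
    ∑ k ∈ range n, (2 * k + a) ^ 2 =
      2 * n * (n - 1) * (2 * n - 1) / 3 + 2 * a * n * (n - 1) + n * a ^ 2 := by
  induction n with
  | zero => simp
  | succ n ih => rw [sum_range_succ, ih]; push_cast; ring

theorem sum_sq_dirichlet_phases (N : ℕ) (θ : ℝ) :
    ∑ k ∈ range N, ((2 * k + 1 - N) * θ) ^ 2 = θ ^ 2 * (N * (N ^ 2 - 1) / 3) := by
  simp_rw [mul_pow, add_sub_assoc]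
  rw [← sum_mul, sum_range_sq_two_mul_add]
  ring

theorem sub_le_dirichletSum (N : ℕ) (θ : ℝ) :
    N - θ ^ 2 * (N * (N ^ 2 - 1) / 6) ≤ dirichletSum N θ := by
  have h := sum_le_sum fun k (_ : k ∈ range N) =>
    one_sub_sq_div_two_le_cos (x := (2 * k + 1 - N) * θ)
  rw [sum_sub_distrib, ← sum_div, sum_sq_dirichlet_phases] at h
  simp only [sum_const, card_range, nsmul_eq_mul, mul_one] at h
  rw [dirichletSum]
  linarith

theorem dirichletSum_le_of_cos_le {c R : ℝ} (hcos : ∀ y, |y| ≤ R → cos y ≤ 1 - c * y ^ 2)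
    {N : ℕ} {θ : ℝ} (hθ : (N - 1) * |θ| ≤ R) :
    dirichletSum N θ ≤ N - c * θ ^ 2 * (N * (N ^ 2 - 1) / 3) := by
  have phase_le : ∀ k ∈ range N, |(2 * k + 1 - N) * θ| ≤ R := by
    intro k hk
    have hkN : (k : ℝ) + 1 ≤ N := by exact_mod_cast mem_range.1 hk
    rw [abs_mul]
    refine le_trans (mul_le_mul_of_nonneg_right ?_ (abs_nonneg θ)) hθ
    rw [abs_le]
    constructor <;> linarith [k.cast_nonneg (α := ℝ)]
  have h := sum_le_sum fun k hk => hcos _ (phase_le k hk)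
  rw [sum_sub_distrib, ← mul_sum, sum_sq_dirichlet_phases] at h
  simp only [sum_const, card_range, nsmul_eq_mul, mul_one] at h
  rw [dirichletSum]
  linarith

-- `43/96 = 1/2 - 5/96`, the error term of `Real.cos_bound`.
theorem cos_le_one_sub_mul_sq_of_abs_le_one {y : ℝ} (hy : |y| ≤ 1) :
    cos y ≤ 1 - 43 / 96 * y ^ 2 := by
  have h := (abs_le.1 (cos_bound hy)).2
  have hy4 : |y| ^ 4 ≤ y ^ 2 := by
    rw [← sq_abs y]
    nlinarith [abs_nonneg y, pow_le_one₀ (abs_nonneg y) hy (n := 2)]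
  nlinarith

theorem fejerKappa_nonneg (f : ℕ) (u : ℝ) : 0 ≤ fejerKappa f u := by
  unfold fejerKappa
  split_ifs <;> positivity

theorem fejerC_nonneg (f : ℕ) : 0 ≤ fejerC f := by
  unfold fejerC
  positivity

section Fejer

variable {f N : ℕ}

theorem fejerC_eq (hN : f + 2 = 2 * N) : fejerC f = 4 * π ^ 2 * (N ^ 2 - 1) / 3 := by
  have hf : (f : ℝ) = 2 * N - 2 := by
    have := congrArg (Nat.cast (R := ℝ)) hN
    push_cast at this
    linarith
  rw [fejerC, hf]
  ring

theorem fejerKappa_eq_dirichletSum (hN : f + 2 = 2 * N) (u : ℝ) :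
    fejerKappa f u = (dirichletSum N (π * u) / N) ^ 4 := by
  have hNf : (f : ℝ) / 2 + 1 = N := by
    have := congrArg (Nat.cast (R := ℝ)) hN
    push_cast at this
    linarith
  have hN0 : (N : ℝ) ≠ 0 := by
    have : N ≠ 0 := by omega
    exact_mod_cast this
  unfold fejerKappa
  rw [hNf]
  split_ifs with hu
  · obtain ⟨m, rfl⟩ := hu
    -- at an integer all the phases agree modulo `2π`
    have phase : ∀ k ∈ range N,
        cos ((2 * k + 1 - N) * (π * m)) = cos (((1 - N : ℤ) * m : ℤ) * π) := by
      intro k _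
      rw [show (2 * k + 1 - N) * (π * m) = (((1 - N : ℤ) * m : ℤ) * π : ℝ) + (k * m : ℤ) * (2 * π)
        by push_cast; ring, cos_add_int_mul_two_pi]
    rw [dirichletSum, sum_congr rfl phase, sum_const, card_range, nsmul_eq_mul,
      mul_div_cancel_left₀ _ hN0]
    have hsin := sin_int_mul_pi ((1 - N : ℤ) * m)
    have hcos := sin_sq_add_cos_sq (((1 - N : ℤ) * m : ℤ) * π)
    rw [hsin] at hcos
    nlinarith
  · have hsin : sin (π * u) ≠ 0 := by
      rw [Ne, sin_eq_zero_iff]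
      rintro ⟨n, hn⟩
      exact hu ⟨n, by nlinarith [pi_pos]⟩
    rw [show (N : ℝ) * π * u = N * (π * u) by ring, ← dirichletSum_mul_sin]
    congr 1
    field_simp

theorem fejerKappa_le_one_sub_of_mul_sq_le (hN : f + 2 = 2 * N) {u : ℝ}
    (hu : fejerC f * u ^ 2 ≤ 1 / 64) : fejerKappa f u ≤ 1 - fejerC f / 3 * u ^ 2 := by
  have hN1 : (1 : ℝ) ≤ N := by exact_mod_cast (show 1 ≤ N by omega)
  set s := fejerC f * u ^ 2 with hs_def
  have hs : (π * u) ^ 2 * (N ^ 2 - 1) = 3 / 4 * s := by rw [hs_def, fejerC_eq hN]; ring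
  have hs0 : 0 ≤ s := by
    nlinarith [mul_nonneg (sq_nonneg (π * u)) (by nlinarith : (0 : ℝ) ≤ N ^ 2 - 1)]
  have hphase : (N - 1) * |π * u| ≤ 1 := by
    have hsq : ((N - 1) * |π * u|) ^ 2 ≤ 1 := by
      rw [mul_pow, sq_abs]
      nlinarith [sq_nonneg (π * u)]
    nlinarith [abs_nonneg (π * u)]
  have hupper := dirichletSum_le_of_cos_le (fun _ => cos_le_one_sub_mul_sq_of_abs_le_one) hphase
  have hlower := sub_le_dirichletSum N (π * u)
  have hsN : (π * u) ^ 2 * (N * (N ^ 2 - 1)) = 3 / 4 * N * s := by linear_combination N * hs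
  have hratio_le : dirichletSum N (π * u) / N ≤ 1 - 43 / 384 * s := by
    rw [div_le_iff₀ (by linarith)]
    linarith
  have hratio_nonneg : 0 ≤ dirichletSum N (π * u) / N :=
    div_nonneg (by nlinarith) (by linarith)
  rw [fejerKappa_eq_dirichletSum hN, show fejerC f / 3 * u ^ 2 = s / 3 by ring]
  calc _ ≤ (1 - 43 / 384 * s) ^ 4 := pow_le_pow_left₀ hratio_nonneg hratio_le 4
    _ ≤ 1 - s / 3 := by nlinarith [pow_nonneg hs0 3, mul_le_mul_of_nonneg_left hu hs0]

theorem abs_dirichletSum_le (hN : f + 2 = 2 * N) {u : ℝ} (hu : |u| ≤ 1 / 2)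
    (hs : 1 / 64 ≤ fejerC f * u ^ 2) : |dirichletSum N (π * u)| ≤ 1279 / 1280 * N := by
  have hN1 : (1 : ℝ) ≤ N := by exact_mod_cast (show 1 ≤ N by omega)
  have hsN : (π * u) ^ 2 * (N * (N ^ 2 - 1)) = 3 / 4 * N * (fejerC f * u ^ 2) := by
    rw [fejerC_eq hN]; ring
  have hπ : π ^ 2 ≤ 10 := by nlinarith [pi_lt_d2, pi_pos]
  -- For `N|u| ≤ 1` all phases lie in `[-π, π]`, where `cos y ≤ 1 - 2y²/π²`, and `π² ≤ 10` yields
  -- the gain `1/1280`; for `N|u| > 1` Jordan's inequality `|sin πu| ≥ 2|u|` gives `|D_N| < N/2`.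
  rcases le_or_gt (N * |u|) 1 with hsmall | hlarge
  · have hphase : (N - 1) * |π * u| ≤ π := by
      rw [abs_mul, abs_of_pos pi_pos]
      nlinarith [pi_pos, abs_nonneg u]
    have hupper := dirichletSum_le_of_cos_le (fun _ => cos_le_one_sub_mul_cos_sq) hphase
    have hlower := sub_le_dirichletSum N (π * u)
    have hgain : N / 1280 ≤ 2 / π ^ 2 * (π * u) ^ 2 * (N * (N ^ 2 - 1) / 3) := by
      rw [mul_assoc, mul_div_assoc', hsN, div_mul_div_comm, le_div_iff₀ (by positivity)]
      nlinarith
    have hloss : (π * u) ^ 2 * (N * (N ^ 2 - 1)) ≤ π ^ 2 * N := by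
      have hNu : u ^ 2 * (N ^ 2 - 1) ≤ 1 := by
        have : (N * |u|) ^ 2 ≤ 1 := pow_le_one₀ (by positivity) hsmall
        rw [mul_pow, sq_abs] at this
        nlinarith [sq_nonneg u]
      calc (π * u) ^ 2 * (N * (N ^ 2 - 1)) = π ^ 2 * N * (u ^ 2 * (N ^ 2 - 1)) := by ring
        _ ≤ π ^ 2 * N := mul_le_of_le_one_right (by positivity) hNu
    rw [abs_le]
    constructor <;> nlinarith
  · have hu0 : 0 < |u| := by nlinarith [abs_nonneg u]
    have hsin : 2 * |u| ≤ |sin (π * u)| := by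
      have := mul_abs_le_abs_sin (x := π * u)
        (by rw [abs_mul, abs_of_pos pi_pos]; nlinarith [pi_pos])
      rwa [abs_mul, abs_of_pos pi_pos, ← mul_assoc, div_mul_cancel₀ _ pi_pos.ne'] at this
    have hprod : |dirichletSum N (π * u)| * |sin (π * u)| ≤ 1 := by
      rw [← abs_mul, dirichletSum_mul_sin]
      exact abs_sin_le_one _
    nlinarith [abs_nonneg (dirichletSum N (π * u))]

theorem fejerKappa_le_of_le_mul_sq (hN : f + 2 = 2 * N) {u : ℝ} (hu : |u| ≤ 1 / 2)
    (hs : 1 / 64 ≤ fejerC f * u ^ 2) : fejerKappa f u ≤ 1 - 1 / 512 := by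
  have hN0 : (0 : ℝ) < N := by exact_mod_cast (show 0 < N by omega)
  have hratio : |dirichletSum N (π * u) / N| ≤ 1279 / 1280 := by
    rw [abs_div, abs_of_pos hN0, div_le_iff₀ hN0]
    exact abs_dirichletSum_le hN hu hs
  rw [fejerKappa_eq_dirichletSum hN, ← Even.pow_abs (by decide)]
  calc _ ≤ (1279 / 1280 : ℝ) ^ 4 := pow_le_pow_left₀ (abs_nonneg _) hratio 4
    _ ≤ 1 - 1 / 512 := by norm_num

theorem fejerKappa_le_one_sub_min (hN : f + 2 = 2 * N) {u : ℝ} (hu : |u| ≤ 1 / 2) :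
    fejerKappa f u ≤ 1 - min (fejerC f / 3 * u ^ 2) (1 / 512) := by
  rcases le_total (fejerC f * u ^ 2) (1 / 64) with hs | hs
  · have := fejerKappa_le_one_sub_of_mul_sq_le hN hs
    linarith [min_le_left (fejerC f / 3 * u ^ 2) (1 / 512)]
  · have := fejerKappa_le_of_le_mul_sq hN hu hs
    linarith [min_le_right (fejerC f / 3 * u ^ 2) (1 / 512)]

end Fejer

namespace Finset

variable {ι : Type*} {a : ι → ℝ}

theorem prod_one_sub_le_one_sub_sum_add_sq (s : Finset ι) (h0 : ∀ i ∈ s, 0 ≤ a i)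
    (h1 : ∀ i ∈ s, a i ≤ 1) :
    ∏ i ∈ s, (1 - a i) ≤ 1 - ∑ i ∈ s, a i + (∑ i ∈ s, a i) ^ 2 / 2 := by
  induction s using cons_induction with
  | empty => simp
  | cons j s _ ih =>
    simp only [mem_cons, forall_eq_or_imp] at h0 h1
    rw [prod_cons, sum_cons]
    have hS := sum_nonneg h0.2
    calc (1 - a j) * ∏ i ∈ s, (1 - a i)
        ≤ (1 - a j) * (1 - ∑ i ∈ s, a i + (∑ i ∈ s, a i) ^ 2 / 2) :=
          mul_le_mul_of_nonneg_left (ih h0.2 h1.2) (by linarith)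
      _ ≤ _ := by nlinarith [mul_nonneg h0.1 (sq_nonneg (∑ i ∈ s, a i))]

theorem prod_one_sub_le_one_sub_min_sum (s : Finset ι) (h0 : ∀ i ∈ s, 0 ≤ a i)
    (h1 : ∀ i ∈ s, a i ≤ 1) :
    ∏ i ∈ s, (1 - a i) ≤ 1 - min (∑ i ∈ s, a i) 1 / 2 := by
  induction s using cons_induction with
  | empty => simp
  | cons j s _ ih =>
    simp only [mem_cons, forall_eq_or_imp] at h0 h1
    rw [prod_cons, sum_cons]
    have hS := sum_nonneg h0.2
    calc (1 - a j) * ∏ i ∈ s, (1 - a i)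
        ≤ (1 - a j) * (1 - min (∑ i ∈ s, a i) 1 / 2) :=
          mul_le_mul_of_nonneg_left (ih h0.2 h1.2) (by linarith)
      _ ≤ _ := by
        rcases le_total (∑ i ∈ s, a i) 1 with h | h
        · rw [min_eq_left h]
          nlinarith [min_le_left (a j + ∑ i ∈ s, a i) 1, mul_nonneg h0.1 (sub_nonneg.2 h)]
        · rw [min_eq_right h]
          nlinarith [min_le_right (a j + ∑ i ∈ s, a i) 1]

theorem min_sum_le_sum_min (s : Finset ι) (h0 : ∀ i ∈ s, 0 ≤ a i) {m : ℝ} (hm : 0 ≤ m) :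
    min (∑ i ∈ s, a i) m ≤ ∑ i ∈ s, min (a i) m := by
  induction s using cons_induction with
  | empty => simp [hm]
  | cons j s _ ih =>
    simp only [mem_cons, forall_eq_or_imp] at h0
    rw [sum_cons, sum_cons]
    have := ih h0.2
    have hS := sum_nonneg h0.2
    simp only [min_def] at this ⊢
    split_ifs at this ⊢ <;> linarith

end Finset

theorem mul_sq_le_of_le_one_div_mul_sqrt {C x b : ℝ} (hC : 0 ≤ C) (hb : 0 < b) (hx0 : 0 ≤ x)
    (hx : x ≤ 1 / (b * √C)) : C * x ^ 2 ≤ 1 / b ^ 2 := by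
  rcases hC.eq_or_lt with rfl | hC
  · simp [hb.le]
  have hxC : x * √C ≤ 1 / b := by
    rw [le_div_iff₀ (by positivity)] at hx
    rw [le_div_iff₀ hb]
    linarith
  calc C * x ^ 2 = (x * √C) ^ 2 := by rw [mul_pow, sq_sqrt hC.le]; ring
    _ ≤ (1 / b) ^ 2 := pow_le_pow_left₀ (by positivity) hxC 2
    _ = 1 / b ^ 2 := by ring

section Multivariate

variable {ι : Type*} [Fintype ι] {f N : ℕ}

theorem prod_fejerKappa_le_of_mul_norm_sq_le (hN : f + 2 = 2 * N) (t : EuclideanSpace ℝ ι)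
    (ht : fejerC f * ‖t‖ ^ 2 ≤ 1 / 64) :
    ∏ i, fejerKappa f (t i) ≤ 1 - fejerC f / 4 * ‖t‖ ^ 2 + 16 * fejerC f ^ 2 * ‖t‖ ^ 4 := by
  have hC := fejerC_nonneg f
  have hcoord : ∀ i, fejerC f * t i ^ 2 ≤ 1 / 64 := fun i => by
    have : t i ^ 2 ≤ ‖t‖ ^ 2 := by
      rw [EuclideanSpace.real_norm_sq_eq]
      exact single_le_sum (fun j _ => sq_nonneg (t j)) (mem_univ i)
    nlinarith
  have hS : ∑ i, fejerC f / 3 * t i ^ 2 = fejerC f / 3 * ‖t‖ ^ 2 := by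
    rw [← mul_sum, EuclideanSpace.real_norm_sq_eq]
  calc ∏ i, fejerKappa f (t i) ≤ ∏ i, (1 - fejerC f / 3 * t i ^ 2) :=
        prod_le_prod (fun i _ => fejerKappa_nonneg f _)
          (fun i _ => fejerKappa_le_one_sub_of_mul_sq_le hN (hcoord i))
    _ ≤ 1 - fejerC f / 3 * ‖t‖ ^ 2 + (fejerC f / 3 * ‖t‖ ^ 2) ^ 2 / 2 := by
        rw [← hS]
        exact prod_one_sub_le_one_sub_sum_add_sq _ (fun i _ => by positivity)
          (fun i _ => by linarith [hcoord i])
    _ ≤ _ := by nlinarith [mul_nonneg hC (sq_nonneg ‖t‖), sq_nonneg (fejerC f * ‖t‖ ^ 2)]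

theorem prod_fejerKappa_le_of_le_norm (hN : f + 2 = 2 * N) (t : EuclideanSpace ℝ ι)
    (ht : ∀ i, |t i| ≤ 1 / 2) {c : ℝ} (hc : 0 ≤ c) (hcC : fejerC f * c ^ 2 ≤ 1 / 128)
    (hct : c ≤ ‖t‖) : ∏ i, fejerKappa f (t i) ≤ 1 - fejerC f / 8 * c ^ 2 := by
  have hC := fejerC_nonneg f
  set a : ι → ℝ := fun i => min (fejerC f / 3 * t i ^ 2) (1 / 512)
  have hsum : fejerC f / 4 * c ^ 2 ≤ min (∑ i, a i) 1 := by
    have hnorm : min (fejerC f / 3 * c ^ 2) (1 / 512) ≤ ∑ i, a i := by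
      refine le_trans ?_ (min_sum_le_sum_min univ (fun i _ => by positivity) (by norm_num))
      rw [← mul_sum, ← EuclideanSpace.real_norm_sq_eq]
      gcongr
    refine le_min ?_ (by nlinarith)
    refine le_trans (le_min ?_ ?_) hnorm <;> nlinarith [sq_nonneg c]
  calc ∏ i, fejerKappa f (t i) ≤ ∏ i, (1 - a i) :=
        prod_le_prod (fun i _ => fejerKappa_nonneg f _)
          (fun i _ => fejerKappa_le_one_sub_min hN (ht i))
    _ ≤ 1 - min (∑ i, a i) 1 / 2 :=
        prod_one_sub_le_one_sub_min_sum _ (fun i _ => le_min (by positivity) (by norm_num))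
          (fun i _ => (min_le_right _ _).trans (by norm_num))
    _ ≤ _ := by linarith

end Multivariate

theorem statement9_general {d : ℕ} (f : ℕ) (hfeven : Even f) :
    (∀ t : EuclideanSpace ℝ (Fin d), ‖t‖ ≤ 1 / (8 * Real.sqrt (fejerC f)) →
      (∏ i, fejerKappa f (t i)) ≤
        1 - fejerC f / 4 * ‖t‖ ^ 2 + 16 * fejerC f ^ 2 * ‖t‖ ^ 4) ∧
    (∀ c : ℝ, 0 < c → c ≤ 1 / (8 * Real.sqrt (2 * fejerC f)) →
      ∀ t : EuclideanSpace ℝ (Fin d), (∀ i, |t i| ≤ 1 / 2) → c ≤ ‖t‖ →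
        |∏ i, fejerKappa f (t i)| ≤ 1 - fejerC f / 8 * c ^ 2) := by
  obtain ⟨N, hN⟩ : ∃ N, f + 2 = 2 * N := by obtain ⟨m, rfl⟩ := hfeven; exact ⟨m + 1, by ring⟩
  have hC := fejerC_nonneg f
  refine ⟨fun t ht => ?_, fun c hc hcC t ht hct => ?_⟩
  · refine prod_fejerKappa_le_of_mul_norm_sq_le hN t ?_
    linarith [mul_sq_le_of_le_one_div_mul_sqrt hC (by norm_num) (norm_nonneg t) ht]
  · rw [abs_of_nonneg (prod_nonneg fun i _ => fejerKappa_nonneg f _)]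
    refine prod_fejerKappa_le_of_le_norm hN t ht hc.le ?_ hct
    linarith [mul_sq_le_of_le_one_div_mul_sqrt (by positivity) (by norm_num) hc.le hcC]

/-- Lemma 15 of the paper.
(a) For `‖t‖₂ ≤ 1/(8√C_f)`: `K(t) ≤ 1 − (C_f/4)‖t‖₂² + 16 C_f² ‖t‖₂⁴`;
(b) for `0 < c ≤ 1/(8√(2C_f))` and `t ∈ [−1/2,1/2]^d` with `‖t‖₂ ≥ c`:
`|K(t)| ≤ 1 − (C_f/8) c²`, where `K(t) = ∏ᵢ κ(tᵢ)`. -/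
theorem statement9 {d : ℕ} (f : ℕ) (hfeven : Even f) (hf : 128 ≤ f) :
    (∀ t : EuclideanSpace ℝ (Fin d), ‖t‖ ≤ 1 / (8 * Real.sqrt (fejerC f)) →
      (∏ i, fejerKappa f (t i)) ≤
        1 - fejerC f / 4 * ‖t‖ ^ 2 + 16 * fejerC f ^ 2 * ‖t‖ ^ 4) ∧
    (∀ c : ℝ, 0 < c → c ≤ 1 / (8 * Real.sqrt (2 * fejerC f)) →
      ∀ t : EuclideanSpace ℝ (Fin d), (∀ i, |t i| ≤ 1 / 2) → c ≤ ‖t‖ →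
        |∏ i, fejerKappa f (t i)| ≤ 1 - fejerC f / 8 * c ^ 2) :=
  statement9_general f hfeven
end

section
/- Let Σ be a real symmetric positive definite d×d matrix and K(t) := exp(−½ ⟨Σ^{-1}t, t⟩) for t ∈ ℝ^d; write r := ‖Σ^{-1/2} t‖₂. Then for every t ∈ ℝ^d and all unit vectors q₁, q₂, q₃ ∈ ℝ^d, the third derivative of K satisfies |∇³K(t)[Σ^{1/2}q₁, Σ^{1/2}q₂, Σ^{1/2}q₃]| ≤ (3r + r³)·e^{−r²/2}. -/
open Matrix

/-- The quadratic form `⟨M v, v⟩ = ∑ᵢⱼ Mᵢⱼ vᵢ vⱼ` of a matrix `M` at a vector `v`. -/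
noncomputable def qf {d : ℕ} (M : Matrix (Fin d) (Fin d) ℝ) (v : EuclideanSpace ℝ (Fin d)) : ℝ :=
  ∑ i, ∑ j, M i j * v i * v j

section CalcAux
open ContinuousLinearMap


variable {E : Type*} [NormedAddCommGroup E] [NormedSpace ℝ E]

lemma third_deriv_apply (f : E → ℝ) (hf : ContDiff ℝ (⊤ : ℕ∞) f) (x v₁ v₂ v₃ : E) :
    iteratedFDeriv ℝ 3 f x ![v₁, v₂, v₃] =
      fderiv ℝ (fun y => fderiv ℝ (fun z => fderiv ℝ f z v₃) y v₂) x v₁ := by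
  have h1 : ContDiff ℝ (⊤ : ℕ∞) (fderiv ℝ f) := hf.fderiv_right (mod_cast le_top)
  have h2 : ContDiff ℝ (⊤ : ℕ∞) (fderiv ℝ (fderiv ℝ f)) := h1.fderiv_right (mod_cast le_top)
  have e1 : iteratedFDeriv ℝ 3 f x ![v₁, v₂, v₃] =
      fderiv ℝ (fderiv ℝ (fderiv ℝ f)) x v₁ v₂ v₃ := by
    rw [iteratedFDeriv_succ_apply_right, iteratedFDeriv_two_apply]
    congr 1
  have hA : ∀ y : E, fderiv ℝ (fun z => fderiv ℝ f z v₃) y =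
      (apply ℝ ℝ v₃).comp (fderiv ℝ (fderiv ℝ f) y) := by
    intro y
    exact (((apply ℝ ℝ v₃).hasFDerivAt).comp y
      ((h1.differentiable (by simp) y).hasFDerivAt)).fderiv
  have hfun : (fun y => fderiv ℝ (fun z => fderiv ℝ f z v₃) y v₂) =
      fun y => fderiv ℝ (fderiv ℝ f) y v₂ v₃ := by
    funext y; rw [hA y]; rfl
  rw [e1, hfun]
  have hc : HasFDerivAt (fun y => fderiv ℝ (fderiv ℝ f) y v₂ v₃)
      (((apply ℝ ℝ v₃).comp (apply ℝ (E →L[ℝ] ℝ) v₂)).comp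
        (fderiv ℝ (fderiv ℝ (fderiv ℝ f)) x)) x := by
    have hc0 := (((apply ℝ ℝ v₃).comp (apply ℝ (E →L[ℝ] ℝ) v₂)).hasFDerivAt).comp x
      ((h2.differentiable (by simp) x).hasFDerivAt)
    exact hc0
  rw [hc.fderiv]; rfl

lemma gauss_hq (B : E →L[ℝ] E →L[ℝ] ℝ) (x : E) :
    HasFDerivAt (fun w => B w w) (B x + B.flip x) x := by
  have h := (B.hasFDerivAt (x := x)).clm_apply (hasFDerivAt_id x)
  exact h.congr_fderiv (by simp)

lemma gauss_K_deriv (B : E →L[ℝ] E →L[ℝ] ℝ) (x : E) :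
    HasFDerivAt (fun w => Real.exp (-(1/2 : ℝ) * B w w))
      (Real.exp (-(1/2 : ℝ) * B x x) • ((-(1/2 : ℝ)) • (B x + B.flip x))) x :=
  ((gauss_hq B x).const_mul (-(1/2 : ℝ))).exp

lemma gauss_contDiff (B : E →L[ℝ] E →L[ℝ] ℝ) :
    ContDiff ℝ (⊤ : ℕ∞) (fun w => Real.exp (-(1/2 : ℝ) * B w w)) := by
  have hq : ContDiff ℝ (⊤ : ℕ∞) (fun w : E => B w w) :=
    B.isBoundedBilinearMap.contDiff.comp (contDiff_id.prodMk contDiff_id)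
  exact Real.contDiff_exp.comp (contDiff_const.mul hq)

lemma gauss_fderiv_K (B : E →L[ℝ] E →L[ℝ] ℝ) (hB : ∀ x y, B x y = B y x) (x v : E) :
    fderiv ℝ (fun w => Real.exp (-(1/2 : ℝ) * B w w)) x v
      = -(Real.exp (-(1/2 : ℝ) * B x x) * B x v) := by
  rw [(gauss_K_deriv B x).fderiv]
  simp [hB v x]
  ring

lemma gauss_fderiv2 (B : E →L[ℝ] E →L[ℝ] ℝ) (hB : ∀ x y, B x y = B y x) (x v₂ v₃ : E) :
    fderiv ℝ (fun z => fderiv ℝ (fun w => Real.exp (-(1/2 : ℝ) * B w w)) z v₃) x v₂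
      = Real.exp (-(1/2 : ℝ) * B x x) * B x v₂ * B x v₃
        - Real.exp (-(1/2 : ℝ) * B x x) * B v₂ v₃ := by
  have hrw : (fun z => fderiv ℝ (fun w => Real.exp (-(1/2 : ℝ) * B w w)) z v₃)
      = fun z => -(Real.exp (-(1/2 : ℝ) * B z z) * B z v₃) :=
    funext fun z => gauss_fderiv_K B hB z v₃
  rw [hrw]
  have hflip : HasFDerivAt (fun z => B z v₃) (B.flip v₃) x := (B.flip v₃).hasFDerivAt
  have h := ((gauss_K_deriv B x).mul hflip).neg
  rw [HasFDerivAt.fderiv (f := fun z => -(Real.exp (-(1/2 : ℝ) * B z z) * B z v₃)) h]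
  simp [hB v₂ x, hB v₃ x]
  ring

lemma gauss_fderiv3 (B : E →L[ℝ] E →L[ℝ] ℝ) (hB : ∀ x y, B x y = B y x) (t v₁ v₂ v₃ : E) :
    fderiv ℝ (fun y => fderiv ℝ (fun z =>
        fderiv ℝ (fun w => Real.exp (-(1/2 : ℝ) * B w w)) z v₃) y v₂) t v₁
      = Real.exp (-(1/2 : ℝ) * B t t) *
          (B v₂ v₃ * B t v₁ + B v₁ v₂ * B t v₃ + B v₁ v₃ * B t v₂
            - B t v₁ * B t v₂ * B t v₃) := by
  have hrw : (fun y => fderiv ℝ (fun z =>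
      fderiv ℝ (fun w => Real.exp (-(1/2 : ℝ) * B w w)) z v₃) y v₂)
      = fun y => Real.exp (-(1/2 : ℝ) * B y y) * B y v₂ * B y v₃
          - Real.exp (-(1/2 : ℝ) * B y y) * B v₂ v₃ :=
    funext fun y => gauss_fderiv2 B hB y v₂ v₃
  rw [hrw]
  have hf2 : HasFDerivAt (fun y => B y v₂) (B.flip v₂) t := (B.flip v₂).hasFDerivAt
  have hf3 : HasFDerivAt (fun y => B y v₃) (B.flip v₃) t := (B.flip v₃).hasFDerivAt
  have hK := gauss_K_deriv B t
  have h := ((hK.mul hf2).mul hf3).sub (hK.mul_const (B v₂ v₃))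
  rw [HasFDerivAt.fderiv (f := fun y => Real.exp (-(1/2 : ℝ) * B y y) * B y v₂ * B y v₃
      - Real.exp (-(1/2 : ℝ) * B y y) * B v₂ v₃) h]
  simp [hB v₁ t, hB v₂ t, hB v₃ t]
  ring

end CalcAux

noncomputable def Bform {d : ℕ} (A : Matrix (Fin d) (Fin d) ℝ) :
    EuclideanSpace ℝ (Fin d) →L[ℝ] EuclideanSpace ℝ (Fin d) →L[ℝ] ℝ :=
  (innerSL ℝ).comp (LinearMap.toContinuousLinearMap (Matrix.toEuclideanLin A))

lemma Bform_apply {d : ℕ} (A : Matrix (Fin d) (Fin d) ℝ) (x y : EuclideanSpace ℝ (Fin d)) :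
    Bform A x y = (A *ᵥ (fun i => x i)) ⬝ᵥ (fun i => y i) := by
  simp [Bform, PiLp.inner_apply, RCLike.inner_apply, dotProduct,
    Matrix.toEuclideanLin_apply, mulVec]
  exact Finset.sum_congr rfl fun _ _ => mul_comm _ _

lemma inner_eq_dot {d : ℕ} (x y : EuclideanSpace ℝ (Fin d)) :
    (inner ℝ x y : ℝ) = (fun i => x i) ⬝ᵥ (fun i => y i) := by
  simp [PiLp.inner_apply, dotProduct]
  exact Finset.sum_congr rfl fun _ _ => mul_comm _ _

lemma Bform_symm {d : ℕ} (A : Matrix (Fin d) (Fin d) ℝ) (hA : Aᵀ = A)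
    (x y : EuclideanSpace ℝ (Fin d)) : Bform A x y = Bform A y x := by
  rw [Bform_apply, Bform_apply, dotProduct_comm, dotProduct_mulVec, ← mulVec_transpose, hA,
    dotProduct_comm]

/-- third-derivative bound for the Gaussian kernel.
For `K(t) = exp(−½⟨Σ⁻¹t,t⟩)`, `S = Σ^{1/2}` and `r = ‖Σ^{-1/2}t‖₂`, for all unit vectors
`q₁,q₂,q₃`: `|∇³K(t)[Σ^{1/2}q₁, Σ^{1/2}q₂, Σ^{1/2}q₃]| ≤ (3r + r³) e^{−r²/2}`. -/
theorem statement12 {d : ℕ} (Sig S : Matrix (Fin d) (Fin d) ℝ)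
    (hSig : Sig.PosDef) (hS : S.PosDef) (hSS : S * S = Sig)
    (t : EuclideanSpace ℝ (Fin d))
    (q₁ q₂ q₃ : EuclideanSpace ℝ (Fin d))
    (h1 : ‖q₁‖ = 1) (h2 : ‖q₂‖ = 1) (h3 : ‖q₃‖ = 1) :
    let r : ℝ := Real.sqrt (∑ i, (S⁻¹.mulVec (fun j => t j) i) ^ 2)
    |iteratedFDeriv ℝ 3 (fun x : EuclideanSpace ℝ (Fin d) => Real.exp (-(1 / 2) * qf Sig⁻¹ x)) t
        ![(EuclideanSpace.equiv (Fin d) ℝ).symm (S.mulVec fun j => q₁ j),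
          (EuclideanSpace.equiv (Fin d) ℝ).symm (S.mulVec fun j => q₂ j),
          (EuclideanSpace.equiv (Fin d) ℝ).symm (S.mulVec fun j => q₃ j)]| ≤
      (3 * r + r ^ 3) * Real.exp (-r ^ 2 / 2) := by
  intro r
  have hrdef : r = Real.sqrt (∑ i, (S⁻¹.mulVec (fun j => t j) i) ^ 2) := rfl
  have hdet : IsUnit S.det := hS.det_pos.ne'.isUnit
  have hA2 : Sig⁻¹ = S⁻¹ * S⁻¹ := by rw [← hSS, Matrix.mul_inv_rev]
  have hSt : Sᵀ = S := by
    rw [← Matrix.conjTranspose_eq_transpose_of_trivial]; exact hS.1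
  have hAt : Sig⁻¹ᵀ = Sig⁻¹ := by
    rw [← Matrix.conjTranspose_eq_transpose_of_trivial]; exact hSig.1.inv
  have hSinvT : S⁻¹ᵀ = S⁻¹ := by rw [Matrix.transpose_nonsing_inv, hSt]
  have hSA : S * Sig⁻¹ = S⁻¹ := by
    rw [hA2, ← Matrix.mul_assoc, Matrix.mul_nonsing_inv S hdet, Matrix.one_mul]
  have hAS : Sig⁻¹ * S = S⁻¹ := by
    rw [hA2, Matrix.mul_assoc, Matrix.nonsing_inv_mul S hdet, Matrix.mul_one]
  set B := Bform Sig⁻¹ with hBdef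
  have hB : ∀ x y, B x y = B y x := Bform_symm _ hAt
  have hAe : ∀ i j, Sig⁻¹ i j = Sig⁻¹ j i := by
    intro i j
    conv_lhs => rw [← hAt]
    rfl
  have hqf : ∀ x : EuclideanSpace ℝ (Fin d), qf Sig⁻¹ x = B x x := by
    intro x
    rw [hBdef, Bform_apply]
    simp only [qf, dotProduct, mulVec, Finset.sum_mul]
    rw [Finset.sum_comm]
    refine Finset.sum_congr rfl fun i _ => Finset.sum_congr rfl fun j _ => ?_
    rw [hAe j i]
  have hfeq : (fun x : EuclideanSpace ℝ (Fin d) => Real.exp (-(1 / 2) * qf Sig⁻¹ x))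
      = fun x => Real.exp (-(1/2 : ℝ) * B x x) := funext fun x => by rw [hqf x]
  rw [hfeq, third_deriv_apply _ (gauss_contDiff B), gauss_fderiv3 B hB]
  -- notation
  set u' : Fin d → ℝ := S⁻¹.mulVec (fun j => t j) with hu'
  set u : EuclideanSpace ℝ (Fin d) := (EuclideanSpace.equiv (Fin d) ℝ).symm u' with hu
  have hr : r = ‖u‖ := by
    rw [hrdef, EuclideanSpace.norm_eq]
    congr 1
    refine Finset.sum_congr rfl fun i _ => ?_
    rw [Real.norm_eq_abs, sq_abs]
    rfl
  have hrnn : 0 ≤ r := Real.sqrt_nonneg _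
  have hBtv : ∀ q : EuclideanSpace ℝ (Fin d),
      B t ((EuclideanSpace.equiv (Fin d) ℝ).symm (S.mulVec fun j => q j))
        = (inner ℝ q u : ℝ) := by
    intro q
    rw [hBdef, Bform_apply, inner_eq_dot]
    have e1 : (fun i => ((EuclideanSpace.equiv (Fin d) ℝ).symm (S.mulVec fun j => q j)) i)
        = S *ᵥ (fun j => q j) := rfl
    have e2 : (fun i => u i) = u' := rfl
    rw [e1, e2, dotProduct_mulVec, ← mulVec_transpose, hSt, mulVec_mulVec, hSA,
      dotProduct_comm]
  have hBvv : ∀ p q : EuclideanSpace ℝ (Fin d),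
      B ((EuclideanSpace.equiv (Fin d) ℝ).symm (S.mulVec fun j => p j))
        ((EuclideanSpace.equiv (Fin d) ℝ).symm (S.mulVec fun j => q j))
        = (inner ℝ p q : ℝ) := by
    intro p q
    rw [hBdef, Bform_apply, inner_eq_dot]
    have e1 : (fun i => ((EuclideanSpace.equiv (Fin d) ℝ).symm (S.mulVec fun j => p j)) i)
        = S *ᵥ (fun j => p j) := rfl
    have e2 : (fun i => ((EuclideanSpace.equiv (Fin d) ℝ).symm (S.mulVec fun j => q j)) i)
        = S *ᵥ (fun j => q j) := rfl
    rw [e1, e2, mulVec_mulVec, hAS, dotProduct_mulVec, ← mulVec_transpose, hSt,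
      mulVec_mulVec, Matrix.mul_nonsing_inv S hdet, one_mulVec]
  have hBtt : B t t = r ^ 2 := by
    rw [hBdef, Bform_apply]
    have e0 : Sig⁻¹ *ᵥ (fun i => t i) = S⁻¹ *ᵥ u' := by
      rw [hu', mulVec_mulVec, ← hA2]
    rw [e0, dotProduct_comm, dotProduct_mulVec, ← mulVec_transpose, hSinvT]
    rw [hrdef, Real.sq_sqrt (by positivity)]
    simp [dotProduct, hu', pow_two]
  -- abbreviations
  have ha : |B t ((EuclideanSpace.equiv (Fin d) ℝ).symm (S.mulVec fun j => q₁ j))| ≤ r := by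
    rw [hBtv q₁, hr]
    calc |(inner ℝ q₁ u : ℝ)| ≤ ‖q₁‖ * ‖u‖ := abs_real_inner_le_norm _ _
      _ = ‖u‖ := by rw [h1, one_mul]
  have hb : |B t ((EuclideanSpace.equiv (Fin d) ℝ).symm (S.mulVec fun j => q₂ j))| ≤ r := by
    rw [hBtv q₂, hr]
    calc |(inner ℝ q₂ u : ℝ)| ≤ ‖q₂‖ * ‖u‖ := abs_real_inner_le_norm _ _
      _ = ‖u‖ := by rw [h2, one_mul]
  have hc : |B t ((EuclideanSpace.equiv (Fin d) ℝ).symm (S.mulVec fun j => q₃ j))| ≤ r := by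
    rw [hBtv q₃, hr]
    calc |(inner ℝ q₃ u : ℝ)| ≤ ‖q₃‖ * ‖u‖ := abs_real_inner_le_norm _ _
      _ = ‖u‖ := by rw [h3, one_mul]
  have hp12 : |B ((EuclideanSpace.equiv (Fin d) ℝ).symm (S.mulVec fun j => q₁ j))
      ((EuclideanSpace.equiv (Fin d) ℝ).symm (S.mulVec fun j => q₂ j))| ≤ 1 := by
    rw [hBvv q₁ q₂]
    calc |(inner ℝ q₁ q₂ : ℝ)| ≤ ‖q₁‖ * ‖q₂‖ := abs_real_inner_le_norm _ _
      _ = 1 := by rw [h1, h2, one_mul]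
  have hp13 : |B ((EuclideanSpace.equiv (Fin d) ℝ).symm (S.mulVec fun j => q₁ j))
      ((EuclideanSpace.equiv (Fin d) ℝ).symm (S.mulVec fun j => q₃ j))| ≤ 1 := by
    rw [hBvv q₁ q₃]
    calc |(inner ℝ q₁ q₃ : ℝ)| ≤ ‖q₁‖ * ‖q₃‖ := abs_real_inner_le_norm _ _
      _ = 1 := by rw [h1, h3, one_mul]
  have hp23 : |B ((EuclideanSpace.equiv (Fin d) ℝ).symm (S.mulVec fun j => q₂ j))
      ((EuclideanSpace.equiv (Fin d) ℝ).symm (S.mulVec fun j => q₃ j))| ≤ 1 := by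
    rw [hBvv q₂ q₃]
    calc |(inner ℝ q₂ q₃ : ℝ)| ≤ ‖q₂‖ * ‖q₃‖ := abs_real_inner_le_norm _ _
      _ = 1 := by rw [h2, h3, one_mul]
  rw [hBtt]
  set a := B t ((EuclideanSpace.equiv (Fin d) ℝ).symm (S.mulVec fun j => q₁ j))
  set b := B t ((EuclideanSpace.equiv (Fin d) ℝ).symm (S.mulVec fun j => q₂ j))
  set c := B t ((EuclideanSpace.equiv (Fin d) ℝ).symm (S.mulVec fun j => q₃ j))
  set p12 := B ((EuclideanSpace.equiv (Fin d) ℝ).symm (S.mulVec fun j => q₁ j))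
      ((EuclideanSpace.equiv (Fin d) ℝ).symm (S.mulVec fun j => q₂ j))
  set p13 := B ((EuclideanSpace.equiv (Fin d) ℝ).symm (S.mulVec fun j => q₁ j))
      ((EuclideanSpace.equiv (Fin d) ℝ).symm (S.mulVec fun j => q₃ j))
  set p23 := B ((EuclideanSpace.equiv (Fin d) ℝ).symm (S.mulVec fun j => q₂ j))
      ((EuclideanSpace.equiv (Fin d) ℝ).symm (S.mulVec fun j => q₃ j))
  have hexp : Real.exp (-(1/2 : ℝ) * r ^ 2) = Real.exp (-r ^ 2 / 2) := by ring_nf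
  have hX : |p23 * a + p12 * c + p13 * b - a * b * c| ≤ 3 * r + r ^ 3 := by
    have t1 : |p23 * a| ≤ 1 * r := by
      rw [abs_mul]; exact mul_le_mul hp23 ha (abs_nonneg a) zero_le_one
    have t2 : |p12 * c| ≤ 1 * r := by
      rw [abs_mul]; exact mul_le_mul hp12 hc (abs_nonneg c) zero_le_one
    have t3 : |p13 * b| ≤ 1 * r := by
      rw [abs_mul]; exact mul_le_mul hp13 hb (abs_nonneg b) zero_le_one
    have t4 : |a * b * c| ≤ r * r * r := by
      rw [abs_mul, abs_mul]
      exact mul_le_mul (mul_le_mul ha hb (abs_nonneg b) hrnn) hc (abs_nonneg c)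
        (by positivity)
    have t5 : |p23 * a + p12 * c + p13 * b - a * b * c|
        ≤ |p23 * a| + |p12 * c| + |p13 * b| + |a * b * c| := by
      have h6 := abs_add_le (p23 * a + p12 * c + p13 * b) (-(a * b * c))
      have h7 := abs_add_le (p23 * a + p12 * c) (p13 * b)
      have h8 := abs_add_le (p23 * a) (p12 * c)
      rw [abs_neg] at h6
      calc |p23 * a + p12 * c + p13 * b - a * b * c|
          = |p23 * a + p12 * c + p13 * b + -(a * b * c)| := by ring_nf
        _ ≤ |p23 * a + p12 * c + p13 * b| + |a * b * c| := h6
        _ ≤ |p23 * a| + |p12 * c| + |p13 * b| + |a * b * c| := by linarith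
    have t6 : r * r * r = r ^ 3 := by ring
    linarith
  calc |Real.exp (-(1/2 : ℝ) * r ^ 2) * (p23 * a + p12 * c + p13 * b - a * b * c)|
      = Real.exp (-(1/2 : ℝ) * r ^ 2) * |p23 * a + p12 * c + p13 * b - a * b * c| := by
        rw [abs_mul, Real.abs_exp]
    _ ≤ Real.exp (-(1/2 : ℝ) * r ^ 2) * (3 * r + r ^ 3) :=
        mul_le_mul_of_nonneg_left hX (Real.exp_pos _).le
    _ = (3 * r + r ^ 3) * Real.exp (-r ^ 2 / 2) := by rw [hexp]; ring
end

section
/- Let α ∈ (0,∞)^d, and let ω be a random vector in [0,∞)^d with independent coordinates, the i-th coordinate having exponential density 2α_i·e^{−2α_i ω_i} on [0,∞). For x ∈ [0,∞)^d define φ_ω(x) := exp(−⟨x, ω⟩)·Π_{i=1}^d √((x_i + α_i)/α_i). Then for all x, x' ∈ [0,∞)^d, 𝔼[φ_ω(x)·φ_ω(x')] = Π_{i=1}^d 2√((x_i+α_i)(x_i'+α_i)) / ((x_i+α_i) + (x_i'+α_i)). In particular 𝔼[φ_ω(x)²] = 1 for every x. -/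
/-!
Both the feature and the law of `ω` factor over the coordinates, so by Fubini the expectation
is a product of one-dimensional integrals. Each of these is a Laplace transform of the
exponential law, `∫ e^{-sw} d(Exp r)(w) = r / (r + s)`, evaluated at `r = 2αᵢ`, `s = xᵢ + x'ᵢ`;
the prefactor `√((xᵢ+αᵢ)(x'ᵢ+αᵢ)) / αᵢ` turns `2αᵢ / (2αᵢ + xᵢ + x'ᵢ)` into the kernel factor.
-/

open MeasureTheory

/-- The exponential distribution on `ℝ` with rate `r`:
the measure with density `w ↦ r e^{−rw}` on `[0,∞)` with respect to Lebesgue measure. -/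
noncomputable def expLaw (r : ℝ) : Measure ℝ :=
  volume.withDensity fun w => ENNReal.ofReal (if 0 ≤ w then r * Real.exp (-(r * w)) else 0)

/-- The rescaled Laplace transform feature
`φ_ω(x) = exp(−⟨x,ω⟩) ∏ᵢ √((xᵢ+αᵢ)/αᵢ)`. -/
noncomputable def laplaceFeature {d : ℕ} (α : Fin d → ℝ) (ω x : Fin d → ℝ) : ℝ :=
  Real.exp (-(∑ i, x i * ω i)) * ∏ i, Real.sqrt ((x i + α i) / α i)

open Real Finset

instance expLaw.instSigmaFinite (r : ℝ) : SigmaFinite (expLaw r) := by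
  unfold expLaw; infer_instance

theorem integral_exp_neg_mul_expLaw {r s : ℝ} (hr : 0 < r) (hrs : 0 < r + s) :
    ∫ w, exp (-(s * w)) ∂expLaw r = r / (r + s) := by
  have hdensity : Measurable fun w : ℝ =>
      ENNReal.ofReal (if 0 ≤ w then r * exp (-(r * w)) else 0) :=
    (Measurable.ite measurableSet_Ici (by fun_prop) measurable_const).ennreal_ofReal
  have hintegrand : (fun w : ℝ =>
        (ENNReal.ofReal (if 0 ≤ w then r * exp (-(r * w)) else 0)).toReal • exp (-(s * w))) =
      Set.indicator (Set.Ici 0) fun w => r * exp (-(r + s) * w) := by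
    ext w
    by_cases hw : 0 ≤ w
    · rw [if_pos hw, Set.indicator_of_mem (Set.mem_Ici.2 hw), ENNReal.toReal_ofReal (by positivity),
        smul_eq_mul, mul_assoc, ← exp_add]
      ring_nf
    · rw [if_neg hw, Set.indicator_of_notMem (by simpa using hw)]
      simp
  rw [expLaw, integral_withDensity_eq_integral_toReal_smul hdensity
      (Filter.Eventually.of_forall fun _ => ENNReal.ofReal_lt_top), hintegrand,
    integral_indicator measurableSet_Ici, integral_Ici_eq_integral_Ioi, integral_const_mul,
    integral_exp_mul_Ioi (by linarith) 0, mul_zero, exp_zero]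
  field_simp

noncomputable def laplaceFeature1D (a w x : ℝ) : ℝ :=
  exp (-(x * w)) * sqrt ((x + a) / a)

theorem laplaceFeature_eq_prod {d : ℕ} (α ω x : Fin d → ℝ) :
    laplaceFeature α ω x = ∏ i, laplaceFeature1D (α i) (ω i) (x i) := by
  simp only [laplaceFeature, laplaceFeature1D, prod_mul_distrib, ← exp_sum, sum_neg_distrib]

theorem integral_laplaceFeature1D_mul {a x y : ℝ} (ha : 0 < a) (hx : 0 ≤ x) (hy : 0 ≤ y) :
    ∫ w, laplaceFeature1D a w x * laplaceFeature1D a w y ∂expLaw (2 * a) =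
      2 * sqrt ((x + a) * (y + a)) / ((x + a) + (y + a)) := by
  have hprefactor : sqrt ((x + a) / a) * sqrt ((y + a) / a) = sqrt ((x + a) * (y + a)) / a := by
    rw [← sqrt_mul (by positivity), div_mul_div_comm, ← sq, sqrt_div' _ (sq_nonneg a),
      sqrt_sq ha.le]
  have hfactor : ∀ w, laplaceFeature1D a w x * laplaceFeature1D a w y =
      exp (-((x + y) * w)) * (sqrt ((x + a) * (y + a)) / a) := by
    intro w
    rw [laplaceFeature1D, laplaceFeature1D, ← hprefactor, mul_mul_mul_comm, ← exp_add]
    ring_nf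
  simp_rw [hfactor]
  rw [integral_mul_const, integral_exp_neg_mul_expLaw (by positivity) (by positivity)]
  field_simp
  ring

theorem integral_laplaceFeature_mul {d : ℕ} {α x y : Fin d → ℝ} (hα : ∀ i, 0 < α i)
    (hx : ∀ i, 0 ≤ x i) (hy : ∀ i, 0 ≤ y i) :
    ∫ ω, laplaceFeature α ω x * laplaceFeature α ω y ∂Measure.pi (fun i => expLaw (2 * α i)) =
      ∏ i, 2 * sqrt ((x i + α i) * (y i + α i)) / ((x i + α i) + (y i + α i)) := by
  simp_rw [laplaceFeature_eq_prod, ← prod_mul_distrib]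
  rw [integral_fintype_prod_eq_prod
    (fun i w => laplaceFeature1D (α i) w (x i) * laplaceFeature1D (α i) w (y i))]
  exact prod_congr rfl fun i _ => integral_laplaceFeature1D_mul (hα i) (hx i) (hy i)

theorem two_mul_sqrt_mul_self_div_add_self {u : ℝ} (hu : 0 < u) :
    2 * sqrt (u * u) / (u + u) = 1 := by
  rw [sqrt_mul_self hu.le]
  field_simp
  ring

/-- the Laplace transform kernel identity.
For `ω` with independent exponential coordinates of rates `2αᵢ`,
`𝔼[φ_ω(x) φ_ω(x')] = ∏ᵢ 2√((xᵢ+αᵢ)(xᵢ'+αᵢ))/((xᵢ+αᵢ)+(xᵢ'+αᵢ))`;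
in particular `𝔼[φ_ω(x)²] = 1`. -/
theorem statement15 {d : ℕ} (α : Fin d → ℝ) (hα : ∀ i, 0 < α i)
    (x x' : Fin d → ℝ) (hx : ∀ i, 0 ≤ x i) (hx' : ∀ i, 0 ≤ x' i) :
    (∫ ω : Fin d → ℝ, laplaceFeature α ω x * laplaceFeature α ω x'
        ∂(Measure.pi fun i => expLaw (2 * α i))) =
      (∏ i, 2 * Real.sqrt ((x i + α i) * (x' i + α i)) / ((x i + α i) + (x' i + α i))) ∧
    (∫ ω : Fin d → ℝ, laplaceFeature α ω x ^ 2
        ∂(Measure.pi fun i => expLaw (2 * α i))) = 1 := by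
  refine ⟨integral_laplaceFeature_mul hα hx hx', ?_⟩
  simp_rw [sq, integral_laplaceFeature_mul hα hx hx]
  exact prod_eq_one fun i _ => two_mul_sqrt_mul_self_div_add_self (by linarith [hα i, hx i])
end

section
/- Let α ∈ (0,∞)^d and for x, x' ∈ [0,∞)^d define K(x,x') := Π_{i=1}^d 2√((x_i+α_i)(x_i'+α_i)) / ((x_i+α_i) + (x_i'+α_i)) and d(x,x') := √(Σ_{i=1}^d (log((x_i+α_i)/(x_i'+α_i)))²). Then 0 < K(x,x') ≤ 1 and K(x,x') ≤ min( 2^d · exp(−½·d(x,x')), 8/(8 + d(x,x')²) ). -/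
open Real Finset

/-- The kernel factor equals `1 / cosh (log (a/b) / 2)`. -/
lemma factor_eq_inv_cosh {a b : ℝ} (ha : 0 < a) (hb : 0 < b) :
    2 * Real.sqrt (a * b) / (a + b) = 1 / Real.cosh (Real.log (a / b) / 2) := by
  have hab : 0 < a / b := div_pos ha hb
  have h1 : Real.exp (Real.log (a / b) / 2) = Real.sqrt (a / b) := by
    rw [← Real.log_sqrt hab.le, Real.exp_log (Real.sqrt_pos.2 hab)]
  have h2 : Real.exp (-(Real.log (a / b) / 2)) = Real.sqrt (b / a) := by
    rw [Real.exp_neg, h1, ← Real.sqrt_inv, inv_div]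
  have hsa : Real.sqrt a * Real.sqrt a = a := Real.mul_self_sqrt ha.le
  have hsb : Real.sqrt b * Real.sqrt b = b := Real.mul_self_sqrt hb.le
  have hsa0 : 0 < Real.sqrt a := Real.sqrt_pos.2 ha
  have hsb0 : 0 < Real.sqrt b := Real.sqrt_pos.2 hb
  rw [Real.cosh_eq, h1, h2, Real.sqrt_div ha.le, Real.sqrt_div hb.le,
    Real.sqrt_mul ha.le]
  have hab0 : 0 < a + b := by linarith
  field_simp
  nlinarith [hsa, hsb, hsa0, hsb0]

lemma cosh_ge_one_add_sq_div_two (x : ℝ) : 1 + x ^ 2 / 2 ≤ Real.cosh x := by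
  have h : Real.cosh x = 1 + 2 * Real.sinh (x / 2) ^ 2 := by
    have := Real.cosh_two_mul (x / 2)
    have h2 : 2 * (x / 2) = x := by ring
    rw [h2] at this
    rw [this, Real.cosh_sq]; ring
  have habs : |x / 2| ≤ |Real.sinh (x / 2)| := by
    rw [Real.abs_sinh]
    exact Real.self_le_sinh_iff.2 (abs_nonneg _)
  have hsq : (x / 2) ^ 2 ≤ Real.sinh (x / 2) ^ 2 := by
    rw [← sq_abs (x / 2), ← sq_abs (Real.sinh (x / 2))]
    exact pow_le_pow_left₀ (abs_nonneg _) habs 2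
  nlinarith

lemma inv_cosh_le_two_exp (x : ℝ) : 1 / Real.cosh x ≤ 2 * Real.exp (-|x|) := by
  have h1 : Real.exp |x| / 2 ≤ Real.cosh x := by
    rw [← Real.cosh_abs, Real.cosh_eq]
    have := (Real.exp_pos (-|x|)).le
    linarith
  have h2 : 0 < Real.exp |x| / 2 := by positivity
  calc 1 / Real.cosh x ≤ 1 / (Real.exp |x| / 2) :=
        one_div_le_one_div_of_le h2 h1
    _ = 2 * Real.exp (-|x|) := by rw [Real.exp_neg]; field_simp

lemma one_add_sum_le_prod {d : ℕ} (c : Fin d → ℝ) (hc : ∀ i, 0 ≤ c i) :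
    1 + ∑ i, c i ≤ ∏ i, (1 + c i) := by
  classical
  have : ∀ s : Finset (Fin d), 1 + ∑ i ∈ s, c i ≤ ∏ i ∈ s, (1 + c i) := by
    intro s
    induction s using Finset.cons_induction with
    | empty => simp
    | cons a s ha ih =>
      rw [Finset.sum_cons, Finset.prod_cons]
      have hs : 0 ≤ ∑ i ∈ s, c i := Finset.sum_nonneg fun i _ => hc i
      nlinarith [hc a, ih]
  exact this Finset.univ

/-- item 1 of Theorem 8 of the paper: decay of the Laplace transform kernel.
With `K(x,x') = ∏ᵢ 2√((xᵢ+αᵢ)(xᵢ'+αᵢ))/((xᵢ+αᵢ)+(xᵢ'+αᵢ))` and the Fisher-type distance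
`d(x,x') = √(∑ᵢ log²((xᵢ+αᵢ)/(xᵢ'+αᵢ)))`, one has `0 < K ≤ 1` and
`K ≤ min(2^d exp(−½ d(x,x')), 8/(8 + d(x,x')²))`. -/
theorem statement16 {d : ℕ} (α x x' : Fin d → ℝ) (hα : ∀ i, 0 < α i)
    (hx : ∀ i, 0 ≤ x i) (hx' : ∀ i, 0 ≤ x' i) :
    let K : ℝ :=
      ∏ i, 2 * Real.sqrt ((x i + α i) * (x' i + α i)) / ((x i + α i) + (x' i + α i))
    let D : ℝ := Real.sqrt (∑ i, Real.log ((x i + α i) / (x' i + α i)) ^ 2)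
    0 < K ∧ K ≤ 1 ∧
      K ≤ min ((2 : ℝ) ^ d * Real.exp (-(1 / 2) * D)) (8 / (8 + D ^ 2)) := by
  intro K D
  have ha : ∀ i, 0 < x i + α i := fun i => by have := hx i; have := hα i; linarith
  have hb : ∀ i, 0 < x' i + α i := fun i => by have := hx' i; have := hα i; linarith
  set t : Fin d → ℝ := fun i => Real.log ((x i + α i) / (x' i + α i)) with ht
  have hK : K = ∏ i, 1 / Real.cosh (t i / 2) :=
    Finset.prod_congr rfl fun i _ => factor_eq_inv_cosh (ha i) (hb i)
  have hcosh : ∀ i, 0 < Real.cosh (t i / 2) := fun i => Real.cosh_pos _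
  have hS : (0 : ℝ) ≤ ∑ i, t i ^ 2 := Finset.sum_nonneg fun i _ => sq_nonneg _
  have hD2 : D ^ 2 = ∑ i, t i ^ 2 := Real.sq_sqrt hS
  have hD0 : 0 ≤ D := Real.sqrt_nonneg _
  have hKpos : 0 < K := by
    rw [hK]; exact Finset.prod_pos fun i _ => by positivity
  have hK1 : K ≤ 1 := by
    rw [hK]
    refine Finset.prod_le_one (fun i _ => by positivity) (fun i _ => ?_)
    rw [div_le_one (hcosh i)]
    exact Real.one_le_cosh _
  refine ⟨hKpos, hK1, le_min ?_ ?_⟩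
  · -- exponential bound
    have hstep : K ≤ ∏ i, 2 * Real.exp (-|t i / 2|) := by
      rw [hK]
      exact Finset.prod_le_prod (fun i _ => by positivity)
        (fun i _ => inv_cosh_le_two_exp _)
    have hprod : ∏ i, 2 * Real.exp (-|t i / 2|)
        = (2 : ℝ) ^ d * Real.exp (∑ i, -|t i / 2|) := by
      rw [Finset.prod_mul_distrib, Finset.prod_const, Real.exp_sum,
        Finset.card_univ, Fintype.card_fin]
    have hDle : D ≤ ∑ i, |t i| := by
      have h1 : ∑ i, t i ^ 2 ≤ (∑ i, |t i|) ^ 2 := by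
        have := Finset.sum_sq_le_sq_sum_of_nonneg
          (s := Finset.univ) (f := fun i => |t i|) (fun i _ => abs_nonneg _)
        simpa [sq_abs] using this
      calc D ≤ Real.sqrt ((∑ i, |t i|) ^ 2) := Real.sqrt_le_sqrt h1
        _ = ∑ i, |t i| := Real.sqrt_sq (Finset.sum_nonneg fun i _ => abs_nonneg _)
    have hsum : ∑ i, -|t i / 2| ≤ -(1 / 2) * D := by
      have : ∑ i, |t i / 2| = (1 / 2) * ∑ i, |t i| := by
        rw [Finset.mul_sum]
        exact Finset.sum_congr rfl fun i _ => by rw [abs_div]; simp; ring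
      rw [Finset.sum_neg_distrib]
      · rw [this]; nlinarith
    calc K ≤ (2 : ℝ) ^ d * Real.exp (∑ i, -|t i / 2|) := hprod ▸ hstep
      _ ≤ (2 : ℝ) ^ d * Real.exp (-(1 / 2) * D) := by
        have := Real.exp_le_exp.2 hsum
        have h2 : (0:ℝ) ≤ (2:ℝ)^d := by positivity
        nlinarith
  · -- rational bound
    have hstep : K ≤ ∏ i, 1 / (1 + t i ^ 2 / 8) := by
      rw [hK]
      refine Finset.prod_le_prod (fun i _ => by positivity) (fun i _ => ?_)
      refine one_div_le_one_div_of_le (by positivity) ?_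
      have := cosh_ge_one_add_sq_div_two (t i / 2)
      calc 1 + t i ^ 2 / 8 = 1 + (t i / 2) ^ 2 / 2 := by ring
        _ ≤ Real.cosh (t i / 2) := this
    have hprod2 : ∏ i, 1 / (1 + t i ^ 2 / 8) ≤ 1 / (1 + (∑ i, t i ^ 2) / 8) := by
      have hpos : ∀ i : Fin d, (0:ℝ) < 1 + t i ^ 2 / 8 := fun i => by positivity
      simp only [one_div]
      rw [Finset.prod_inv_distrib]
      have hle : 1 + (∑ i, t i ^ 2) / 8 ≤ ∏ i, (1 + t i ^ 2 / 8) := by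
        have := one_add_sum_le_prod (fun i => t i ^ 2 / 8) (fun i => by positivity)
        calc 1 + (∑ i, t i ^ 2) / 8 = 1 + ∑ i, t i ^ 2 / 8 := by
              rw [Finset.sum_div]
          _ ≤ _ := this
      exact inv_anti₀ (by positivity) hle
    have : 1 / (1 + (∑ i, t i ^ 2) / 8) = 8 / (8 + D ^ 2) := by
      have h8 : (0:ℝ) < 8 + ∑ i, t i ^ 2 := by linarith
      rw [hD2, div_eq_div_iff (by positivity) h8.ne']
      ring
    have hfinal := hstep.trans hprod2
    rw [this] at hfinal
    exact hfinal
end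

section
/- Let α ∈ (0,∞)^d, c > 0, and x, x' ∈ [0,∞)^d with d(x,x') ≤ c, where d(x,x') := √(Σ_{i=1}^d (log((x_i+α_i)/(x_i'+α_i)))²). Then √(Σ_{i=1}^d (1 − (x_i+α_i)/(x_i'+α_i))²) ≤ (1 + c·e^c) · d(x,x'). -/
lemma statement17_pointwise (t c : ℝ) (hc : 0 < c) (ht : |t| ≤ c) :
    (1 - Real.exp t) ^ 2 ≤ (1 + c * Real.exp c) ^ 2 * t ^ 2 := by
  obtain ⟨h1, h2⟩ := abs_le.mp ht
  have hKe : Real.exp c ≤ 1 + c * Real.exp c := by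
    have h := Real.add_one_le_exp (-c)
    have hme : Real.exp (-c) * Real.exp c = 1 := by rw [← Real.exp_add]; simp
    nlinarith [Real.exp_pos c]
  have hK1 : (1:ℝ) ≤ 1 + c * Real.exp c := by nlinarith [Real.exp_pos c]
  rcases le_or_gt t 0 with h | h
  · have he1 : Real.exp t ≤ 1 := Real.exp_le_one_iff.mpr h
    have h2' : t + 1 ≤ Real.exp t := Real.add_one_le_exp t
    have ha : (1 - Real.exp t) ^ 2 ≤ t ^ 2 := by nlinarith
    nlinarith [ha, sq_nonneg t, mul_nonneg (sub_nonneg.mpr hK1)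
      (by nlinarith [Real.exp_pos c] : (0:ℝ) ≤ 1 + c * Real.exp c + 1),
      mul_nonneg (mul_nonneg (sub_nonneg.mpr hK1)
        (by nlinarith [Real.exp_pos c] : (0:ℝ) ≤ 1 + c * Real.exp c + 1)) (sq_nonneg t)]
  · have het : Real.exp t ≤ Real.exp c := Real.exp_le_exp.mpr h2
    have h3 : Real.exp t - t * Real.exp t ≤ 1 := by
      have hh := Real.add_one_le_exp (-t)
      have hme : Real.exp (-t) * Real.exp t = 1 := by rw [← Real.exp_add]; simp
      nlinarith [Real.exp_pos t]
    have hge : 1 ≤ Real.exp t := Real.one_le_exp h.le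
    have habs : Real.exp t - 1 ≤ (1 + c * Real.exp c) * t := by
      have : t * Real.exp t ≤ (1 + c * Real.exp c) * t := by nlinarith
      nlinarith
    nlinarith [mul_nonneg (mul_nonneg (by linarith : (0:ℝ) ≤ 1 + c * Real.exp c) h.le)
      (sub_nonneg.mpr hge)]

/-- Lemma 21 of the paper: metric variation of the Laplace transform kernel.
If the log-ratio distance `d(x,x') = √(∑ᵢ log²((xᵢ+αᵢ)/(xᵢ'+αᵢ)))` is at most `c`, then
`√(∑ᵢ (1 − (xᵢ+αᵢ)/(xᵢ'+αᵢ))²) ≤ (1 + c e^c) d(x,x')`. -/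
theorem statement17 {d : ℕ} (α x x' : Fin d → ℝ) (hα : ∀ i, 0 < α i)
    (hx : ∀ i, 0 ≤ x i) (hx' : ∀ i, 0 ≤ x' i) (c : ℝ) (hc : 0 < c)
    (hd : Real.sqrt (∑ i, Real.log ((x i + α i) / (x' i + α i)) ^ 2) ≤ c) :
    Real.sqrt (∑ i, (1 - (x i + α i) / (x' i + α i)) ^ 2) ≤
      (1 + c * Real.exp c) *
        Real.sqrt (∑ i, Real.log ((x i + α i) / (x' i + α i)) ^ 2) := by
  set S := ∑ i, Real.log ((x i + α i) / (x' i + α i)) ^ 2 with hS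
  have hS0 : 0 ≤ S := Finset.sum_nonneg fun i _ => sq_nonneg _
  have hSc : S ≤ c ^ 2 := by nlinarith [Real.sq_sqrt hS0, Real.sqrt_nonneg S]
  have hK0 : 0 ≤ 1 + c * Real.exp c := by nlinarith [Real.exp_pos c]
  have key : ∑ i, (1 - (x i + α i) / (x' i + α i)) ^ 2 ≤ (1 + c * Real.exp c) ^ 2 * S := by
    rw [hS, Finset.mul_sum]
    apply Finset.sum_le_sum
    intro i _
    set r := (x i + α i) / (x' i + α i) with hr
    have hrpos : 0 < r := div_pos (by linarith [hα i, hx i]) (by linarith [hα i, hx' i])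
    have hti : Real.log r ^ 2 ≤ c ^ 2 := by
      have h1 : Real.log r ^ 2 ≤ S := by
        rw [hS, hr]
        exact Finset.single_le_sum (f := fun j => Real.log ((x j + α j) / (x' j + α j)) ^ 2)
          (fun j _ => sq_nonneg _) (Finset.mem_univ i)
      linarith
    have habs : |Real.log r| ≤ c := by
      have h2 := Real.sqrt_le_sqrt hti
      rwa [Real.sqrt_sq_eq_abs, Real.sqrt_sq hc.le] at h2
    have := statement17_pointwise (Real.log r) c hc habs
    rwa [Real.exp_log hrpos] at this
  calc Real.sqrt (∑ i, (1 - (x i + α i) / (x' i + α i)) ^ 2)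
      ≤ Real.sqrt ((1 + c * Real.exp c) ^ 2 * S) := Real.sqrt_le_sqrt key
    _ = (1 + c * Real.exp c) * Real.sqrt S := by
        rw [Real.sqrt_mul (sq_nonneg _), Real.sqrt_sq hK0]
end

section
/- Let X ⊆ ℝ^d and let K : X × X → ℂ be a kernel, twice continuously differentiable in each variable, with Hermitian symmetry K(x,x') = conj(K(x',x)). Assume that for each x ∈ X the matrix met_x := ∇₁∇₂K(x,x) is real symmetric positive definite, that K(x,x) = 1, and that ∇₁K(x,x) = 0. Define the normalized derivatives K^{(10)}(x,x') := met_x^{-1/2}∇₁K(x,x') ∈ ℂ^d and K^{(11)}(x,x') := met_x^{-1/2} ∇₁∇₂K(x,x') met_{x'}^{-1/2} ∈ ℂ^{d×d} (so that K^{(11)}(x,x) = Id). Let x₁, …, x_s ∈ X be points such that for all i ≠ j: |K(x_i,x_j)| ≤ 1/(4s), ‖K^{(10)}(x_i,x_j)‖₂ ≤ 1/(4s), ‖K^{(10)}(x_j,x_i)‖₂ ≤ 1/(4s), and ‖K^{(11)}(x_i,x_j)‖ ≤ 1/(4s) (spectral norm). Let Υ ∈ ℂ^{s(d+1)×s(d+1)}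 be the Hermitian matrix with 2×2 block structure Υ = [[Υ₀, Υ₁*],[Υ₁, Υ₂]], where Υ₀ := (K(x_i,x_j))_{i,j} ∈ ℂ^{s×s}, Υ₁ ∈ ℂ^{sd×s} has (i,j) block K^{(10)}(x_i,x_j), and Υ₂ ∈ ℂ^{sd×sd} has (i,j) block K^{(11)}(x_i,x_j). Then ‖Id − Υ‖ ≤ 1/2 in spectral norm; in particular Υ is invertible and ‖Υ^{-1}‖ ≤ 2. -/
/-!
The diagonal blocks of `Υ` are identities: `K(x,x) = 1`, `∇₁K(x,x) = 0`, and
`met_x^{-1/2} met_x met_x^{-1/2} = Id`. So `Id − Υ` has zero diagonal blocks, and each of its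
off-diagonal `(1 + d) × (1 + d)` blocks consists of a scalar, a row, a column and a `d × d` matrix,
each of norm at most `q = 1/(4s)`. Such a block contributes at most
`q (|u₀| + ‖u'‖) (|v₀| + ‖v'‖)` to `⟨u, (Id − Υ) v⟩`, and Cauchy–Schwarz over the `s` blocks turns
the sum of these into `2 s q ‖u‖ ‖v‖ = ‖u‖ ‖v‖ / 2`. The Neumann series then inverts
`Υ = Id − (Id − Υ)` with `‖Υ⁻¹‖ ≤ 1 / (1 − 1/2) = 2`.
-/

open Matrix

/-- The `i`-th standard basis vector of `ℝ^d`. -/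
noncomputable def eb {d : ℕ} (i : Fin d) : EuclideanSpace ℝ (Fin d) :=
  EuclideanSpace.single i 1

/-- Partial derivative of a bivariate function in the `k`-th coordinate of the first variable. -/
noncomputable def pd1 {d : ℕ}
    (K : EuclideanSpace ℝ (Fin d) → EuclideanSpace ℝ (Fin d) → ℂ) (k : Fin d) :
    EuclideanSpace ℝ (Fin d) → EuclideanSpace ℝ (Fin d) → ℂ :=
  fun x y => fderiv ℝ (fun z => K z y) x (eb k)

/-- Partial derivative of a bivariate function in the `l`-th coordinate of the second variable. -/
noncomputable def pd2 {d : ℕ}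
    (K : EuclideanSpace ℝ (Fin d) → EuclideanSpace ℝ (Fin d) → ℂ) (l : Fin d) :
    EuclideanSpace ℝ (Fin d) → EuclideanSpace ℝ (Fin d) → ℂ :=
  fun x y => fderiv ℝ (fun z => K x z) y (eb l)

/-- The mixed derivative matrix `∇₁∇₂K(x,x') = (∂_{x_k}∂_{x'_l} K(x,x'))_{k,l}`. -/
noncomputable def mixed11 {d : ℕ}
    (K : EuclideanSpace ℝ (Fin d) → EuclideanSpace ℝ (Fin d) → ℂ)
    (x x' : EuclideanSpace ℝ (Fin d)) : Matrix (Fin d) (Fin d) ℂ :=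
  Matrix.of fun k l => pd2 (pd1 K k) l x x'

/-- The normalized first derivative `K^{(10)}(x,x') = met_x^{-1/2} ∇₁K(x,x') ∈ ℂ^d`,
where `R x = met_x^{-1/2}`. -/
noncomputable def K10n {d : ℕ}
    (K : EuclideanSpace ℝ (Fin d) → EuclideanSpace ℝ (Fin d) → ℂ)
    (R : EuclideanSpace ℝ (Fin d) → Matrix (Fin d) (Fin d) ℝ)
    (x x' : EuclideanSpace ℝ (Fin d)) : Fin d → ℂ :=
  ((R x).map Complex.ofReal).mulVec fun k => pd1 K k x x'

/-- The normalized mixed derivative `K^{(11)}(x,x') = met_x^{-1/2} ∇₁∇₂K(x,x') met_{x'}^{-1/2}`. -/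
noncomputable def K11n {d : ℕ}
    (K : EuclideanSpace ℝ (Fin d) → EuclideanSpace ℝ (Fin d) → ℂ)
    (R : EuclideanSpace ℝ (Fin d) → Matrix (Fin d) (Fin d) ℝ)
    (x x' : EuclideanSpace ℝ (Fin d)) : Matrix (Fin d) (Fin d) ℂ :=
  (R x).map Complex.ofReal * mixed11 K x x' * (R x').map Complex.ofReal

/-- The ℓ² norm of a complex vector. -/
noncomputable def cnorm2 {d : ℕ} (v : Fin d → ℂ) : ℝ :=
  Real.sqrt (∑ k, Complex.normSq (v k))

/-- The spectral (ℓ²-operator) norm of a complex matrix. -/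
noncomputable def specNormC {n : Type*} [Fintype n] [DecidableEq n] (M : Matrix n n ℂ) : ℝ :=
  ‖Matrix.toEuclideanCLM (𝕜 := ℂ) M‖

/-- The interaction (Gram) matrix `Υ = [[Υ₀, Υ₁*], [Υ₁, Υ₂]]` of the points `x i`, with blocks
`Υ₀ = (K(x_i,x_j))`, `Υ₁` having `(i,j)` block `K^{(10)}(x_i,x_j)` and `Υ₂` having `(i,j)` block
`K^{(11)}(x_i,x_j)`. -/
noncomputable def gram {d s : ℕ}
    (K : EuclideanSpace ℝ (Fin d) → EuclideanSpace ℝ (Fin d) → ℂ)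
    (R : EuclideanSpace ℝ (Fin d) → Matrix (Fin d) (Fin d) ℝ)
    (x : Fin s → EuclideanSpace ℝ (Fin d)) :
    Matrix (Fin s ⊕ Fin s × Fin d) (Fin s ⊕ Fin s × Fin d) ℂ :=
  Matrix.of fun p q =>
    match p, q with
    | Sum.inl i, Sum.inl j => K (x i) (x j)
    | Sum.inl i, Sum.inr (j, l) => starRingEnd ℂ (K10n K R (x j) (x i) l)
    | Sum.inr (i, k), Sum.inl j => K10n K R (x i) (x j) k
    | Sum.inr (i, k), Sum.inr (j, l) => K11n K R (x i) (x j) k l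

open scoped Matrix.Norms.L2Operator
open WithLp

theorem isUnit_and_norm_inverse_le {R : Type*} [NormedRing R] [HasSummableGeomSeries R]
    (h1 : ‖(1 : R)‖ ≤ 1) {x : R} {r : ℝ} (hx : ‖1 - x‖ ≤ r) (hr : r < 1) :
    IsUnit x ∧ ‖Ring.inverse x‖ ≤ (1 - r)⁻¹ := by
  have hlt : ‖1 - x‖ < 1 := hx.trans_lt hr
  have hx' : 1 - (1 - x) = x := sub_sub_cancel 1 x
  refine ⟨hx' ▸ isUnit_one_sub_of_norm_lt_one hlt, ?_⟩
  rw [← hx', NormedRing.inverse_one_sub _ hlt]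
  calc ‖∑' n : ℕ, (1 - x) ^ n‖ ≤ ‖(1 : R)‖ - 1 + (1 - ‖1 - x‖)⁻¹ :=
        tsum_geometric_le_of_norm_lt_one _ hlt
    _ ≤ (1 - r)⁻¹ := by
        have : (1 - ‖1 - x‖)⁻¹ ≤ (1 - r)⁻¹ := by gcongr
        linarith

section EuclideanForms

variable {𝕜 : Type*} [RCLike 𝕜] {n : Type*} [Fintype n]

theorem norm_toLp_star (y : n → 𝕜) : ‖toLp 2 (star y)‖ = ‖toLp 2 y‖ := by
  simp [EuclideanSpace.norm_eq]

theorem norm_dotProduct_le (r z : n → 𝕜) : ‖r ⬝ᵥ z‖ ≤ ‖toLp 2 r‖ * ‖toLp 2 z‖ := by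
  have h := norm_inner_le_norm (𝕜 := 𝕜) (toLp 2 (star r)) (toLp 2 z)
  rwa [EuclideanSpace.inner_toLp_toLp, star_star, dotProduct_comm, norm_toLp_star] at h

variable [DecidableEq n]

theorem Matrix.l2_opNorm_one_le : ‖(1 : Matrix n n 𝕜)‖ ≤ 1 := by
  rw [cstar_norm_def, map_one]
  exact ContinuousLinearMap.norm_id_le

theorem Matrix.isUnit_and_l2_opNorm_inv_le {A : Matrix n n 𝕜} {r : ℝ} (hA : ‖1 - A‖ ≤ r)
    (hr : r < 1) : IsUnit A ∧ ‖A⁻¹‖ ≤ (1 - r)⁻¹ := by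
  rw [nonsing_inv_eq_ringInverse]
  exact isUnit_and_norm_inverse_le l2_opNorm_one_le hA hr

theorem norm_star_dotProduct_mulVec_le (A : Matrix n n 𝕜) (y z : n → 𝕜) :
    ‖star y ⬝ᵥ A *ᵥ z‖ ≤ ‖toLp 2 y‖ * (‖A‖ * ‖toLp 2 z‖) := by
  refine (norm_dotProduct_le _ _).trans ?_
  rw [norm_toLp_star]
  gcongr
  exact Matrix.l2_opNorm_mulVec A (toLp 2 z)

theorem Matrix.l2_opNorm_le_of_forall_norm_dotProduct_le (M : Matrix n n 𝕜) {C : ℝ} (hC : 0 ≤ C)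
    (h : ∀ u v : n → 𝕜, ‖star u ⬝ᵥ M *ᵥ v‖ ≤ C * (‖toLp 2 u‖ * ‖toLp 2 v‖)) : ‖M‖ ≤ C := by
  rw [cstar_norm_def]
  refine ContinuousLinearMap.opNorm_le_of_re_inner_le hC fun v u hv hu => ?_
  calc RCLike.re (inner 𝕜 (toEuclideanCLM (n := n) (𝕜 := 𝕜) M v) u)
      ≤ ‖inner 𝕜 u (toEuclideanCLM (n := n) (𝕜 := 𝕜) M v)‖ :=
        (RCLike.re_le_norm _).trans (norm_inner_symm _ _).le
    _ = ‖star (ofLp u) ⬝ᵥ M *ᵥ ofLp v‖ := by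
        rw [EuclideanSpace.inner_eq_star_dotProduct, ofLp_toEuclideanCLM, dotProduct_comm]
    _ ≤ C := by simpa [hu, hv] using h (ofLp u) (ofLp v)

/-- The left-hand side is `⟨(y₀, y), B (z₀, z)⟩` for the bordered matrix
`B = [[a, r], [c, A]]`. -/
theorem norm_bordered_form_le {a : 𝕜} {r c : n → 𝕜} {A : Matrix n n 𝕜} {q : ℝ}
    (ha : ‖a‖ ≤ q) (hr : ‖toLp 2 r‖ ≤ q) (hc : ‖toLp 2 c‖ ≤ q) (hA : ‖A‖ ≤ q)
    (y₀ z₀ : 𝕜) (y z : n → 𝕜) :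
    ‖star y₀ * (a * z₀ + r ⬝ᵥ z) + star y ⬝ᵥ (z₀ • c + A *ᵥ z)‖
      ≤ q * ((‖y₀‖ + ‖toLp 2 y‖) * (‖z₀‖ + ‖toLp 2 z‖)) := by
  have hq : 0 ≤ q := (norm_nonneg a).trans ha
  have h₀₀ : ‖star y₀ * (a * z₀)‖ ≤ ‖y₀‖ * (q * ‖z₀‖) := by
    rw [norm_mul, norm_mul, norm_star]
    gcongr
  have h₀₁ : ‖star y₀ * (r ⬝ᵥ z)‖ ≤ ‖y₀‖ * (q * ‖toLp 2 z‖) := by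
    rw [norm_mul, norm_star]
    gcongr
    exact (norm_dotProduct_le r z).trans (by gcongr)
  have h₁₀ : ‖z₀ * (star y ⬝ᵥ c)‖ ≤ ‖z₀‖ * (‖toLp 2 y‖ * q) := by
    rw [norm_mul]
    gcongr
    exact (norm_dotProduct_le _ c).trans (by rw [norm_toLp_star]; gcongr)
  have h₁₁ : ‖star y ⬝ᵥ A *ᵥ z‖ ≤ ‖toLp 2 y‖ * (q * ‖toLp 2 z‖) :=
    (norm_star_dotProduct_mulVec_le A y z).trans (by gcongr)
  rw [dotProduct_add, dotProduct_smul, smul_eq_mul, mul_add]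
  calc _ ≤ ‖star y₀ * (a * z₀)‖ + ‖star y₀ * (r ⬝ᵥ z)‖
          + (‖z₀ * (star y ⬝ᵥ c)‖ + ‖star y ⬝ᵥ A *ᵥ z‖) :=
        (norm_add_le _ _).trans (add_le_add (norm_add_le _ _) (norm_add_le _ _))
    _ ≤ _ := by linarith

end EuclideanForms

section Blocks

variable {𝕜 : Type*} [RCLike 𝕜] {ι κ : Type*} [Fintype ι] [Fintype κ]

def inrSlice (w : ι ⊕ ι × κ → 𝕜) (i : ι) : κ → 𝕜 := fun k => w (.inr (i, k))

theorem star_dotProduct_mulVec_eq_sum_blocks (M : Matrix (ι ⊕ ι × κ) (ι ⊕ ι × κ) 𝕜)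
    (u v : ι ⊕ ι × κ → 𝕜) :
    star u ⬝ᵥ M *ᵥ v = ∑ i, ∑ j,
      (star (u (.inl i)) * (M (.inl i) (.inl j) * v (.inl j)
          + inrSlice (M (.inl i)) j ⬝ᵥ inrSlice v j)
        + star (inrSlice u i) ⬝ᵥ (v (.inl j) • inrSlice (Mᵀ (.inl j)) i
          + M.submatrix (fun k => .inr (i, k)) (fun l => .inr (j, l)) *ᵥ inrSlice v j)) := by
  simp only [dotProduct, mulVec, inrSlice, Fintype.sum_sum_type, Fintype.sum_prod_type,
    Finset.sum_add_distrib, Finset.mul_sum, Pi.add_apply, Pi.smul_apply, Pi.star_apply,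
    smul_eq_mul, submatrix_apply, transpose_apply, mul_add]
  rw [add_add_add_comm]
  congr 2 <;> refine Finset.sum_congr rfl fun i _ => Finset.sum_comm.trans ?_
  · simp only [mul_comm (v _)]
  · rfl

theorem norm_toLp_sq_eq_sum_blocks (u : ι ⊕ ι × κ → 𝕜) :
    ‖toLp 2 u‖ ^ 2 = ∑ i, (‖u (.inl i)‖ ^ 2 + ‖toLp 2 (inrSlice u i)‖ ^ 2) := by
  simp only [EuclideanSpace.norm_sq_eq, Fintype.sum_sum_type, Fintype.sum_prod_type,
    Finset.sum_add_distrib, inrSlice]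

theorem sum_norm_blocks_le (u : ι ⊕ ι × κ → 𝕜) :
    ∑ i, (‖u (.inl i)‖ + ‖toLp 2 (inrSlice u i)‖) ≤ √(2 * Fintype.card ι) * ‖toLp 2 u‖ := by
  rw [← Real.sqrt_sq (norm_nonneg (toLp 2 u)), ← Real.sqrt_mul (by positivity)]
  refine Real.le_sqrt_of_sq_le ?_
  calc (∑ i, (‖u (.inl i)‖ + ‖toLp 2 (inrSlice u i)‖)) ^ 2
      ≤ Fintype.card ι * ∑ i, (‖u (.inl i)‖ + ‖toLp 2 (inrSlice u i)‖) ^ 2 :=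
        sq_sum_le_card_mul_sum_sq
    _ ≤ Fintype.card ι * ∑ i, 2 * (‖u (.inl i)‖ ^ 2 + ‖toLp 2 (inrSlice u i)‖ ^ 2) := by
        gcongr with i
        exact add_sq_le
    _ = 2 * Fintype.card ι * ‖toLp 2 u‖ ^ 2 := by
        rw [norm_toLp_sq_eq_sum_blocks, ← Finset.mul_sum]
        ring

theorem Matrix.l2_opNorm_le_of_block_bounds [DecidableEq ι] [DecidableEq κ]
    (M : Matrix (ι ⊕ ι × κ) (ι ⊕ ι × κ) 𝕜) {q : ℝ} (hq : 0 ≤ q)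
    (h : ∀ i j, ‖M (.inl i) (.inl j)‖ ≤ q ∧ ‖toLp 2 (inrSlice (M (.inl i)) j)‖ ≤ q ∧
      ‖toLp 2 (inrSlice (Mᵀ (.inl j)) i)‖ ≤ q ∧
      ‖M.submatrix (fun k => .inr (i, k)) (fun l => .inr (j, l))‖ ≤ q) :
    ‖M‖ ≤ 2 * Fintype.card ι * q := by
  refine M.l2_opNorm_le_of_forall_norm_dotProduct_le (by positivity) fun u v => ?_
  let c (w : ι ⊕ ι × κ → 𝕜) (i : ι) : ℝ := ‖w (.inl i)‖ + ‖toLp 2 (inrSlice w i)‖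
  rw [star_dotProduct_mulVec_eq_sum_blocks]
  calc _ ≤ ∑ i, ∑ j, q * (c u i * c v j) := by
        refine (norm_sum_le _ _).trans (Finset.sum_le_sum fun i _ => ?_)
        refine (norm_sum_le _ _).trans (Finset.sum_le_sum fun j _ => ?_)
        obtain ⟨h₀₀, h₀₁, h₁₀, h₁₁⟩ := h i j
        exact norm_bordered_form_le h₀₀ h₀₁ h₁₀ h₁₁ _ _ _ _
    _ = q * ((∑ i, c u i) * ∑ j, c v j) := by
        simp_rw [Finset.sum_mul_sum, Finset.mul_sum]
    _ ≤ q * ((√(2 * Fintype.card ι) * ‖toLp 2 u‖) * (√(2 * Fintype.card ι) * ‖toLp 2 v‖)) := by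
        gcongr
        exacts [sum_norm_blocks_le u, sum_norm_blocks_le v]
    _ = 2 * Fintype.card ι * q * (‖toLp 2 u‖ * ‖toLp 2 v‖) := by
        rw [mul_mul_mul_comm, Real.mul_self_sqrt (by positivity)]
        ring

end Blocks

theorem cnorm2_eq_norm_toLp {d : ℕ} (v : Fin d → ℂ) : cnorm2 v = ‖toLp 2 v‖ := by
  simp [cnorm2, EuclideanSpace.norm_eq, Complex.normSq_eq_norm_sq]

theorem specNormC_eq_l2_opNorm {n : Type*} [Fintype n] [DecidableEq n] (M : Matrix n n ℂ) :
    specNormC M = ‖M‖ :=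
  rfl

theorem Matrix.mul_mul_eq_one_of_mul_self_eq_inv {R : Type*} [CommRing R] {n : Type*} [Fintype n]
    [DecidableEq n] {A B : Matrix n n R} (hA : IsUnit A) (hB : B * B = A⁻¹) : B * A * B = 1 :=
  mul_eq_one_comm.mp <| by
    rw [← mul_assoc, hB, nonsing_inv_mul _ ((isUnit_iff_isUnit_det A).mp hA)]

section Gram

variable {d s : ℕ} {K : EuclideanSpace ℝ (Fin d) → EuclideanSpace ℝ (Fin d) → ℂ}
  {R : EuclideanSpace ℝ (Fin d) → Matrix (Fin d) (Fin d) ℝ}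

theorem K10n_self {y : EuclideanSpace ℝ (Fin d)} (hgrad : ∀ k, pd1 K k y y = 0) :
    K10n K R y y = 0 := by
  simp only [K10n, hgrad]
  exact mulVec_zero _

theorem K11n_self {y : EuclideanSpace ℝ (Fin d)} {met : Matrix (Fin d) (Fin d) ℝ}
    (hmixed : met.map Complex.ofReal = mixed11 K y y) (hmet : IsUnit met)
    (hR : R y * R y = met⁻¹) : K11n K R y y = 1 := by
  have hmap (A : Matrix (Fin d) (Fin d) ℝ) : A.map Complex.ofReal = Complex.ofRealHom.mapMatrix A :=
    rfl
  rw [K11n, ← hmixed, hmap, hmap, ← map_mul, ← map_mul,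
    Matrix.mul_mul_eq_one_of_mul_self_eq_inv hmet hR, map_one]

variable {x : Fin s → EuclideanSpace ℝ (Fin d)}

@[simp]
theorem gram_inl_inl (i j : Fin s) : gram K R x (.inl i) (.inl j) = K (x i) (x j) :=
  rfl

@[simp]
theorem gram_inl_inr (i j : Fin s) (l : Fin d) :
    gram K R x (.inl i) (.inr (j, l)) = starRingEnd ℂ (K10n K R (x j) (x i) l) :=
  rfl

@[simp]
theorem gram_inr_inl (i j : Fin s) (k : Fin d) :
    gram K R x (.inr (i, k)) (.inl j) = K10n K R (x i) (x j) k :=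
  rfl

@[simp]
theorem gram_inr_inr (i j : Fin s) (k l : Fin d) :
    gram K R x (.inr (i, k)) (.inr (j, l)) = K11n K R (x i) (x j) k l :=
  rfl

theorem one_sub_gram_block_bounds {q : ℝ} (hq : 0 ≤ q)
    (hdiag : ∀ i, K (x i) (x i) = 1 ∧ K10n K R (x i) (x i) = 0 ∧ K11n K R (x i) (x i) = 1)
    (hsep : ∀ i j, i ≠ j →
      ‖K (x i) (x j)‖ ≤ q ∧ cnorm2 (K10n K R (x i) (x j)) ≤ q ∧
      cnorm2 (K10n K R (x j) (x i)) ≤ q ∧ specNormC (K11n K R (x i) (x j)) ≤ q)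
    (i j : Fin s) :
    ‖(1 - gram K R x) (.inl i) (.inl j)‖ ≤ q ∧
    ‖toLp 2 (inrSlice ((1 - gram K R x) (.inl i)) j)‖ ≤ q ∧
    ‖toLp 2 (inrSlice ((1 - gram K R x)ᵀ (.inl j)) i)‖ ≤ q ∧
    ‖(1 - gram K R x).submatrix (fun k => .inr (i, k)) (fun l => .inr (j, l))‖ ≤ q := by
  rcases eq_or_ne i j with rfl | hij
  · obtain ⟨h₀₀, h₁₀, h₁₁⟩ := hdiag i
    have hblock : (1 - gram K R x).submatrix (fun k => .inr (i, k)) (fun l => .inr (i, l)) = 0 := by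
      ext k l
      simp [one_apply, h₁₁]
    have hrow : inrSlice ((1 - gram K R x) (.inl i)) i = 0 := by
      ext l
      simp [inrSlice, h₁₀]
    have hcol : inrSlice ((1 - gram K R x)ᵀ (.inl i)) i = 0 := by
      ext k
      simp [inrSlice, h₁₀]
    rw [hrow, hcol, hblock]
    simp [h₀₀, hq]
  · obtain ⟨h₀₀, h₁₀, h₀₁, h₁₁⟩ := hsep i j hij
    have hrow : inrSlice ((1 - gram K R x) (.inl i)) j = -star (K10n K R (x j) (x i)) := by
      ext l
      simp [inrSlice]
    have hcol : inrSlice ((1 - gram K R x)ᵀ (.inl j)) i = -K10n K R (x i) (x j) := by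
      ext k
      simp [inrSlice]
    have hblock : (1 - gram K R x).submatrix (fun k => .inr (i, k)) (fun l => .inr (j, l))
        = -K11n K R (x i) (x j) := by
      ext k l
      simp [one_apply, hij]
    refine ⟨by simpa [hij] using h₀₀, ?_, ?_, ?_⟩
    · rwa [hrow, toLp_neg, norm_neg, norm_toLp_star, ← cnorm2_eq_norm_toLp]
    · rwa [hcol, toLp_neg, norm_neg, ← cnorm2_eq_norm_toLp]
    · rwa [hblock, norm_neg, ← specNormC_eq_l2_opNorm]

end Gram

theorem statement18_general {d s : ℕ}
    (X : Set (EuclideanSpace ℝ (Fin d)))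
    (K : EuclideanSpace ℝ (Fin d) → EuclideanSpace ℝ (Fin d) → ℂ)
    (met : EuclideanSpace ℝ (Fin d) → Matrix (Fin d) (Fin d) ℝ)
    (hmet : ∀ x ∈ X, (met x).map Complex.ofReal = mixed11 K x x ∧ (met x).PosDef)
    (hone : ∀ x ∈ X, K x x = 1)
    (hgrad : ∀ x ∈ X, ∀ k, pd1 K k x x = 0)
    (R : EuclideanSpace ℝ (Fin d) → Matrix (Fin d) (Fin d) ℝ)
    (hR : ∀ x ∈ X, (R x).PosDef ∧ R x * R x = (met x)⁻¹)
    (x : Fin s → EuclideanSpace ℝ (Fin d)) (hx : ∀ i, x i ∈ X)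
    (hsep : ∀ i j, i ≠ j →
      ‖K (x i) (x j)‖ ≤ 1 / (4 * s) ∧
      cnorm2 (K10n K R (x i) (x j)) ≤ 1 / (4 * s) ∧
      cnorm2 (K10n K R (x j) (x i)) ≤ 1 / (4 * s) ∧
      specNormC (K11n K R (x i) (x j)) ≤ 1 / (4 * s)) :
    specNormC (1 - gram K R x) ≤ 1 / 2 ∧
    IsUnit (gram K R x) ∧
    specNormC (gram K R x)⁻¹ ≤ 2 := by
  have hdiag (i : Fin s) :
      K (x i) (x i) = 1 ∧ K10n K R (x i) (x i) = 0 ∧ K11n K R (x i) (x i) = 1 :=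
    ⟨hone _ (hx i), K10n_self (hgrad _ (hx i)),
      K11n_self (hmet _ (hx i)).1 (hmet _ (hx i)).2.isUnit (hR _ (hx i)).2⟩
  have hnorm : ‖1 - gram K R x‖ ≤ 1 / 2 := by
    refine ((1 - gram K R x).l2_opNorm_le_of_block_bounds (by positivity)
      (one_sub_gram_block_bounds (by positivity) hdiag hsep)).trans ?_
    rcases eq_or_ne s 0 with rfl | hs
    · norm_num
    · field_simp
      norm_num
  obtain ⟨hunit, hinv⟩ := Matrix.isUnit_and_l2_opNorm_inv_le hnorm (by norm_num)
  exact ⟨hnorm, hunit, hinv.trans_eq (by norm_num)⟩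

/-- invertibility of the interaction matrix; proof of Theorem 2 of the paper.
For a Hermitian kernel `K` with `K(x,x) = 1`, `∇₁K(x,x) = 0` and positive definite Fisher metric
tensor `met x = ∇₁∇₂K(x,x)` (with `R x` its inverse positive square root), if the points
`x₁, …, x_s` satisfy the pairwise interaction bounds `≤ 1/(4s)`, then `‖Id − Υ‖ ≤ 1/2`;
in particular `Υ` is invertible and `‖Υ⁻¹‖ ≤ 2`. -/
theorem statement18 {d s : ℕ} (hs : 0 < s)
    (X : Set (EuclideanSpace ℝ (Fin d)))
    (K : EuclideanSpace ℝ (Fin d) → EuclideanSpace ℝ (Fin d) → ℂ)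
    (hK : ContDiff ℝ 2 fun p : EuclideanSpace ℝ (Fin d) × EuclideanSpace ℝ (Fin d) => K p.1 p.2)
    (hherm : ∀ x ∈ X, ∀ x' ∈ X, K x x' = starRingEnd ℂ (K x' x))
    (met : EuclideanSpace ℝ (Fin d) → Matrix (Fin d) (Fin d) ℝ)
    (hmet : ∀ x ∈ X, (met x).map Complex.ofReal = mixed11 K x x ∧ (met x).PosDef)
    (hone : ∀ x ∈ X, K x x = 1)
    (hgrad : ∀ x ∈ X, ∀ k, pd1 K k x x = 0)
    (R : EuclideanSpace ℝ (Fin d) → Matrix (Fin d) (Fin d) ℝ)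
    (hR : ∀ x ∈ X, (R x).PosDef ∧ R x * R x = (met x)⁻¹)
    (x : Fin s → EuclideanSpace ℝ (Fin d)) (hx : ∀ i, x i ∈ X)
    (hsep : ∀ i j, i ≠ j →
      ‖K (x i) (x j)‖ ≤ 1 / (4 * s) ∧
      cnorm2 (K10n K R (x i) (x j)) ≤ 1 / (4 * s) ∧
      cnorm2 (K10n K R (x j) (x i)) ≤ 1 / (4 * s) ∧
      specNormC (K11n K R (x i) (x j)) ≤ 1 / (4 * s)) :
    specNormC (1 - gram K R x) ≤ 1 / 2 ∧
    IsUnit (gram K R x) ∧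
    specNormC (gram K R x)⁻¹ ≤ 2 :=
  statement18_general X K met hmet hone hgrad R hR x hx hsep
end
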